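/- arXiv:1808.09301 — 6 statements merged into one kernel-verified Lean document; each statement's English description precedes it below -/
import Mathlib

section
/- Let q ≥ 4 be a prime power. Then every nonzero vector of F_q³ is a linear combination of at most 3 vectors of the truncated conic C* = {(1, a, a²) : a ∈ F_q, a ≠ 0}. In particular, the points (1,0,0) and (0,0,1) of PG(2,q) are linear combinations of at most 3 points of C*. -/
/-- `v` is a linear combination of at most `k` vectors of the set `S`. -/
def IsCombOfAtMost {F : Type} [Field F] {d : ℕ} (S : Set (Fin d → F)) (k : ℕ)
    (v : Fin d → F) : Prop :=
  ∃ (t : Finset (Fin d → F)) (c : (Fin d → F) → F),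
    ↑t ⊆ S ∧ t.card ≤ k ∧ v = ∑ w ∈ t, c w • w

/-- The truncated conic `C* = {(1, a, a²) : a ∈ F_q, a ≠ 0}`. -/
def truncConic (F : Type) [Field F] : Set (Fin 3 → F) :=
  {w | ∃ a : F, a ≠ 0 ∧ w = ![1, a, a ^ 2]}

/-! Three distinct nonzero field elements give three points of `C*` whose Vandermonde matrix is
invertible, so these points span `F³` and every vector is a combination of them. -/

lemma isCombOfAtMost_of_span_eq_top {F : Type} [Field F] {d : ℕ} {S : Set (Fin d → F)} {k : ℕ}
    {ι : Type*} [Fintype ι] (w : ι → Fin d → F) (hwS : ∀ i, w i ∈ S)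
    (hk : Fintype.card ι ≤ k) (hspan : Submodule.span F (Set.range w) = ⊤) (v : Fin d → F) :
    IsCombOfAtMost S k v := by
  classical
  have hv : v ∈ Submodule.span F ↑(Finset.univ.image w) := by
    simp [hspan]
  obtain ⟨c, -, hc⟩ := Submodule.mem_span_finset.mp hv
  refine ⟨Finset.univ.image w, c, ?_, (Finset.card_image_le).trans hk, hc.symm⟩
  simpa [Set.subset_def] using hwS

lemma span_range_vandermonde_eq_top {K : Type*} [Field K] {n : ℕ} {x : Fin n → K}
    (hx : Function.Injective x) :
    Submodule.span K (Set.range (Matrix.vandermonde x)) = ⊤ := by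
  have hunit : IsUnit (Matrix.vandermonde x) := by
    rw [Matrix.isUnit_iff_isUnit_det, isUnit_iff_ne_zero]
    exact Matrix.det_vandermonde_ne_zero_iff.mpr hx
  exact (Matrix.linearIndependent_rows_of_isUnit hunit).span_eq_top_of_card_eq_finrank'
    (by simp)

lemma vandermonde_mem_truncConic {F : Type} [Field F] (x : Fin 3 → F) (hx : ∀ i, x i ≠ 0)
    (i : Fin 3) : Matrix.vandermonde x i ∈ truncConic F := by
  refine ⟨x i, hx i, ?_⟩
  ext j
  fin_cases j <;> simp [Matrix.vandermonde_apply]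

lemma isCombOfAtMost_truncConic {F : Type} [Field F] (x : Fin 3 → F)
    (hx : Function.Injective x) (hx0 : ∀ i, x i ≠ 0) (v : Fin 3 → F) :
    IsCombOfAtMost (truncConic F) 3 v :=
  isCombOfAtMost_of_span_eq_top _ (vandermonde_mem_truncConic x hx0) (by simp)
    (span_range_vandermonde_eq_top hx) v

lemma exists_injective_ne_zero (F : Type) [Field F] [Fintype F] (hF : 4 ≤ Fintype.card F) :
    ∃ x : Fin 3 → F, Function.Injective x ∧ ∀ i, x i ≠ 0 := by
  classical
  have hcard : Fintype.card (Fin 3) ≤ Fintype.card Fˣ := by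
    rw [Fintype.card_units, Fintype.card_fin]
    omega
  obtain ⟨e⟩ := Function.Embedding.nonempty_of_card_le hcard
  exact ⟨fun i => (e i : F), fun i j h => e.injective (Units.ext h), fun i => (e i).ne_zero⟩

/-- for a prime power `q ≥ 4`, every nonzero vector of `F_q³` is a
linear combination of at most `3` vectors of the truncated conic `C*`;
in particular, the points `(1,0,0)` and `(0,0,1)` are linear combinations of at
most `3` points of `C*`. -/
theorem stmt6 (q : ℕ) (F : Type) [Field F] [Fintype F] (hF : Fintype.card F = q)
    (hq : 4 ≤ q) :
    (∀ v : Fin 3 → F, v ≠ 0 → IsCombOfAtMost (truncConic F) 3 v)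
    ∧ IsCombOfAtMost (truncConic F) 3 ![1, 0, 0]
    ∧ IsCombOfAtMost (truncConic F) 3 ![0, 0, 1] := by
  obtain ⟨x, hx, hx0⟩ := exists_injective_ne_zero F (hF ▸ hq)
  exact ⟨fun v _ => isCombOfAtMost_truncConic x hx hx0 v,
    isCombOfAtMost_truncConic x hx hx0 _, isCombOfAtMost_truncConic x hx hx0 _⟩
end

section
/- Let q be a prime power with q = 4 or q ≥ 7. Then every nonzero vector of F_q³ that is not a scalar multiple of (1,0,0) or of (0,0,1) is a linear combination of at most 2 vectors of the set C* ∪ {T}, where C* = {(1, a, a²) : a ∈ F_q, a ≠ 0} and T = (0,1,0). Moreover, every nonzero vector of F_q³ that is not a scalar multiple of (1,0,0) is a linear combination of at most 2 vectors of C* ∪ {T, (0,0,1)}. -/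
namespace Stmt7Aux

variable {F : Type} [Field F]

omit [Field F] in
lemma exists_not_mem_of_card_lt [Fintype F] (L : Finset F)
    (h : L.card < Fintype.card F) : ∃ a : F, a ∉ L := by
  by_contra hc
  push_neg at hc
  have hsub : (Finset.univ : Finset F) ⊆ L := fun a _ => hc a
  have := Finset.card_le_card hsub
  simp only [Finset.card_univ] at this
  omega

omit [Field F] in
lemma exists_good [Fintype F] (P : F → Prop) (L : Finset F)
    (hL : L.card < Fintype.card F) (h : ∀ a, P a → a ∈ L) : ∃ a, ¬ P a := by
  obtain ⟨a, haL⟩ := exists_not_mem_of_card_lt L hL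
  exact ⟨a, fun hp => haL (h a hp)⟩

omit [Field F] in
lemma card2 [DecidableEq F] (a b : F) : ({a, b} : Finset F).card ≤ 2 :=
  (Finset.card_insert_le _ _).trans (by simp)

omit [Field F] in
lemma card3 [DecidableEq F] (a b c : F) : ({a, b, c} : Finset F).card ≤ 3 :=
  (Finset.card_insert_le _ _).trans (Nat.succ_le_succ (card2 b c))

omit [Field F] in
lemma card5 [DecidableEq F] (a b c d e : F) : ({a, b, c, d, e} : Finset F).card ≤ 5 :=
  (Finset.card_insert_le _ _).trans (Nat.succ_le_succ
    ((Finset.card_insert_le _ _).trans (Nat.succ_le_succ (card3 c d e))))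

lemma char2_of_card4 [Fintype F] (h : Fintype.card F = 4) : (2 : F) = 0 := by
  have hp : (ringChar F).Prime := CharP.char_is_prime F (ringChar F)
  obtain ⟨n, -, hc⟩ := FiniteField.card F (ringChar F)
  have hdvd : ringChar F ∣ 4 := by
    rw [h] at hc
    exact hc ▸ dvd_pow_self _ n.ne_zero
  have h2 : ringChar F = 2 := by
    have h1 := hp.two_le
    have h4 := Nat.le_of_dvd (by norm_num) hdvd
    interval_cases h : (ringChar F) <;> revert hp hdvd <;> decide
  have : CharP F 2 := h2 ▸ ringChar.charP F
  have := CharP.cast_eq_zero F 2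
  exact_mod_cast this

lemma sq_surj_of_char2 [Fintype F] (h2 : (2 : F) = 0) :
    Function.Surjective (fun a : F => a ^ 2) := by
  have hinj : Function.Injective (fun a : F => a ^ 2) := by
    intro a b hab
    simp only at hab
    have hz : (a - b) ^ 2 = 0 := by linear_combination hab + (b ^ 2 - a * b) * h2
    have := pow_eq_zero_iff (n := 2) (by norm_num) |>.mp hz
    exact sub_eq_zero.mp this
  exact Finite.surjective_of_injective hinj

lemma comb_one (S : Set (Fin 3 → F)) (w : Fin 3 → F) (hw : w ∈ S) (c : F) :
    IsCombOfAtMost S 2 (c • w) := by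
  refine ⟨{w}, fun _ => c, by simpa using hw, by simp, by simp⟩

lemma comb_two (S : Set (Fin 3 → F)) (w1 w2 : Fin 3 → F) (h1 : w1 ∈ S) (h2 : w2 ∈ S)
    (hne : w1 ≠ w2) (c1 c2 : F) :
    IsCombOfAtMost S 2 (c1 • w1 + c2 • w2) := by
  classical
  refine ⟨{w1, w2}, fun w => if w = w1 then c1 else c2, ?_, ?_, ?_⟩
  · intro w hw
    simp only [Finset.coe_insert, Finset.coe_singleton, Set.mem_insert_iff,
      Set.mem_singleton_iff] at hw
    rcases hw with h | h <;> simp [h, h1, h2]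
  · exact (Finset.card_insert_le _ _).trans (by simp)
  · rw [Finset.sum_pair hne]
    simp [hne.symm]

lemma comb_mono (S S' : Set (Fin 3 → F)) (h : S ⊆ S') (k : ℕ) (v : Fin 3 → F)
    (hv : IsCombOfAtMost S k v) : IsCombOfAtMost S' k v := by
  obtain ⟨t, c, ht, hc, he⟩ := hv
  exact ⟨t, c, ht.trans h, hc, he⟩

/-- Part 1 of the statement. -/
lemma part1 [Fintype F] (q : ℕ) (hF : Fintype.card F = q) (hq : q = 4 ∨ 7 ≤ q)
    (v : Fin 3 → F) (hv1 : ¬(v 1 = 0 ∧ v 2 = 0)) (hv2 : ¬(v 0 = 0 ∧ v 1 = 0)) :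
    IsCombOfAtMost (truncConic F ∪ {![0, 1, 0]}) 2 v := by
  classical
  set S : Set (Fin 3 → F) := truncConic F ∪ {![0, 1, 0]} with hSdef
  have hT : ![(0 : F), 1, 0] ∈ S := Or.inr rfl
  have hC : ∀ a : F, a ≠ 0 → ![(1 : F), a, a ^ 2] ∈ S := fun a ha => Or.inl ⟨a, ha, rfl⟩
  have hCT : ∀ a : F, ![(1 : F), a, a ^ 2] ≠ ![0, 1, 0] := by
    intro a he
    simpa using congrFun he 0
  have hCC : ∀ a b : F, a ≠ b → ![(1 : F), a, a ^ 2] ≠ ![1, b, b ^ 2] := by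
    intro a b hab he
    exact hab (by simpa using congrFun he 1)
  set x := v 0 with hxdef
  set y := v 1 with hydef
  set z := v 2 with hzdef
  have hv : v = ![x, y, z] := by
    funext i; fin_cases i <;> rfl
  have hcard4 : 4 ≤ Fintype.card F := by rcases hq with h | h <;> omega
  by_cases hx0 : x = 0
  · have hy0 : y ≠ 0 := fun h => hv2 ⟨hx0, h⟩
    by_cases hz0 : z = 0
    · have heq : v = y • ![0, 1, 0] := by
        rw [hv, hx0, hz0]; funext i; fin_cases i <;> simp
      rw [heq]
      exact comb_one S _ hT y
    · -- v = (0, y, z), y,z ≠ 0 : two conic points with opposite coefficients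
      obtain ⟨a, ha⟩ : ∃ a : F, ¬(a = 0 ∨ y * a = z ∨ 2 * (y * a) = z) := by
        by_cases h2 : (2 : F) = 0
        · refine exists_good _ ({0, z * y⁻¹} : Finset F)
            (lt_of_le_of_lt (card2 _ _) (by omega)) ?_
          rintro a (h | h | h)
          · simp [h]
          · simp only [Finset.mem_insert, Finset.mem_singleton]
            right; field_simp [hy0]; linear_combination h
          · exact absurd (by linear_combination (y * a) * h2 - h) hz0
        · refine exists_good _ ({0, z * y⁻¹, z * (2 * y)⁻¹} : Finset F)
            (lt_of_le_of_lt (card3 _ _ _) (by omega)) ?_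
          rintro a (h | h | h)
          · simp [h]
          · simp only [Finset.mem_insert, Finset.mem_singleton]
            right; left; field_simp [hy0]; linear_combination h
          · simp only [Finset.mem_insert, Finset.mem_singleton]
            right; right
            have h2y : 2 * y ≠ 0 := mul_ne_zero h2 hy0
            field_simp
            linear_combination h
      push_neg at ha
      obtain ⟨ha0, ha1, ha2⟩ := ha
      set b : F := (z - y * a) / y with hbdef
      have hb : y * b = z - y * a := by
        rw [hbdef]; field_simp
      have hb0 : b ≠ 0 := by
        intro h
        rw [h, mul_zero] at hb
        exact ha1 (by linear_combination hb)
      have hba : a ≠ b := by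
        intro h
        apply ha2
        rw [← h] at hb
        linear_combination hb
      have heq : v = (y / (a - b)) • ![1, a, a ^ 2] + (-(y / (a - b))) • ![1, b, b ^ 2] := by
        rw [hv, hx0]
        have hab' : a - b ≠ 0 := sub_ne_zero.mpr hba
        funext i
        fin_cases i <;> simp <;> field_simp
        · ring
        · linear_combination (b - a) * hb
      rw [heq]
      exact comb_two S _ _ (hC a ha0) (hC b hb0) (hCC a b hba) _ _
  · -- x ≠ 0
    by_cases hsq : ∃ a : F, a ≠ 0 ∧ x * a ^ 2 = z
    · -- one conic point and the tangent point T
      obtain ⟨a, ha0, ha2⟩ := hsq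
      have heq : v = x • ![1, a, a ^ 2] + (y - x * a) • ![0, 1, 0] := by
        rw [hv]
        funext i
        fin_cases i <;> simp [← ha2, mul_comm]
      rw [heq]
      exact comb_two S _ _ (hC a ha0) hT (hCT a) _ _
    · -- two distinct conic points
      have hyz : ¬(y = 0 ∧ z = 0) := hv1
      obtain ⟨a, ha⟩ : ∃ a : F,
          ¬(a = 0 ∨ x * a = y ∨ y * a = z ∨ x * a ^ 2 - 2 * (y * a) + z = 0) := by
        rcases hq with hq4 | hq7
        · -- q = 4 : characteristic 2 and z = 0
          have h2 : (2 : F) = 0 := char2_of_card4 (hF.trans hq4)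
          have hz0 : z = 0 := by
            obtain ⟨s, hs⟩ := sq_surj_of_char2 h2 (z * x⁻¹)
            simp only at hs
            rcases eq_or_ne s 0 with h | h
            · rw [h] at hs
              have hzx : z * x⁻¹ = 0 := by simpa using hs.symm
              rcases mul_eq_zero.mp hzx with h' | h'
              · exact h'
              · exact absurd (inv_eq_zero.mp h') hx0
            · exact absurd ⟨s, h, by rw [hs]; field_simp⟩ hsq
          have hy0 : y ≠ 0 := fun h => hyz ⟨h, hz0⟩
          refine exists_good _ ({0, y * x⁻¹} : Finset F)
            (lt_of_le_of_lt (card2 _ _) (by rw [hF, hq4]; omega)) ?_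
          rintro a (h | h | h | h)
          · simp [h]
          · simp only [Finset.mem_insert, Finset.mem_singleton]
            right; field_simp [hx0]; linear_combination h
          · rw [hz0] at h
            rcases mul_eq_zero.mp h with h' | h'
            · exact absurd h' hy0
            · simp [h']
          · have hxa2 : x * a ^ 2 = 0 := by linear_combination h + (y * a) * h2 - hz0
            rcases mul_eq_zero.mp hxa2 with h' | h'
            · exact absurd h' hx0
            · simp [pow_eq_zero_iff (n := 2) (by norm_num) |>.mp h']
        · -- 7 ≤ q
          by_cases hr : ∃ r : F, r ^ 2 = y ^ 2 - x * z
          · obtain ⟨r, hrr⟩ := hr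
            refine exists_good _
              ({0, y * x⁻¹, z * y⁻¹, (y + r) * x⁻¹, (y - r) * x⁻¹} : Finset F)
              (lt_of_le_of_lt (card5 _ _ _ _ _) (by omega)) ?_
            rintro a (h | h | h | h)
            · simp [h]
            · simp only [Finset.mem_insert, Finset.mem_singleton]
              right; left; field_simp [hx0]; linear_combination h
            · rcases eq_or_ne y 0 with hy' | hy'
              · rw [hy'] at h
                exact absurd ⟨hy', by simpa using h.symm⟩ hyz
              · simp only [Finset.mem_insert, Finset.mem_singleton]
                right; right; left; field_simp [hy']; linear_combination h
            · have hfac : (x * a - y - r) * (x * a - y + r) = 0 := by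
                linear_combination x * h - hrr
              simp only [Finset.mem_insert, Finset.mem_singleton]
              rcases mul_eq_zero.mp hfac with h' | h'
              · right; right; right; left
                field_simp [hx0]
                linear_combination h'
              · right; right; right; right
                field_simp [hx0]
                linear_combination h'
          · refine exists_good _ ({0, y * x⁻¹, z * y⁻¹} : Finset F)
              (lt_of_le_of_lt (card3 _ _ _) (by omega)) ?_
            rintro a (h | h | h | h)
            · simp [h]
            · simp only [Finset.mem_insert, Finset.mem_singleton]
              right; left; field_simp [hx0]; linear_combination h
            · rcases eq_or_ne y 0 with hy' | hy'
              · rw [hy'] at h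
                exact absurd ⟨hy', by simpa using h.symm⟩ hyz
              · simp only [Finset.mem_insert, Finset.mem_singleton]
                right; right; field_simp [hy']; linear_combination h
            · exact absurd ⟨x * a - y, by linear_combination x * h⟩ hr
      push_neg at ha
      obtain ⟨ha0, ha1, ha2, ha3⟩ := ha
      have hd : x * a - y ≠ 0 := sub_ne_zero.mpr ha1
      set b : F := (y * a - z) / (x * a - y) with hbdef
      have hb : b * (x * a - y) = y * a - z := div_mul_cancel₀ _ hd
      have hb0 : b ≠ 0 := by
        intro h
        rw [h, zero_mul] at hb
        exact ha2 (by linear_combination -hb)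
      have hba : a ≠ b := by
        intro h
        apply ha3
        rw [← h] at hb
        linear_combination hb
      have hba' : b - a ≠ 0 := sub_ne_zero.mpr (Ne.symm hba)
      have heq : v = ((x * b - y) / (b - a)) • ![1, a, a ^ 2]
          + ((y - x * a) / (b - a)) • ![1, b, b ^ 2] := by
        rw [hv]
        funext i
        fin_cases i <;> simp <;> field_simp
        · ring
        · ring
        · linear_combination (b - a) * hb
      rw [heq]
      exact comb_two S _ _ (hC a ha0) (hC b hb0) (hCC a b hba) _ _

end Stmt7Aux

open Stmt7Aux in
/-- for a prime power `q = 4` or `q ≥ 7`, every nonzero vector of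
`F_q³` that is not a scalar multiple of `(1,0,0)` or of `(0,0,1)` is a linear
combination of at most `2` vectors of `C* ∪ {T}`, where `T = (0,1,0)`.
Moreover, every nonzero vector of `F_q³` that is not a scalar multiple of
`(1,0,0)` is a linear combination of at most `2` vectors of `C* ∪ {T, (0,0,1)}`. -/
theorem stmt7 (q : ℕ) (F : Type) [Field F] [Fintype F] (hF : Fintype.card F = q)
    (hq : q = 4 ∨ 7 ≤ q) :
    (∀ v : Fin 3 → F, v ≠ 0 →
      (¬ ∃ c : F, v = c • ![1, 0, 0]) → (¬ ∃ c : F, v = c • ![0, 0, 1]) →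
      IsCombOfAtMost (truncConic F ∪ {![0, 1, 0]}) 2 v)
    ∧ (∀ v : Fin 3 → F, v ≠ 0 →
      (¬ ∃ c : F, v = c • ![1, 0, 0]) →
      IsCombOfAtMost (truncConic F ∪ {![0, 1, 0], ![0, 0, 1]}) 2 v) := by
  have key : ∀ v : Fin 3 → F, (¬ ∃ c : F, v = c • ![1, 0, 0]) →
      (¬ ∃ c : F, v = c • ![0, 0, 1]) →
      IsCombOfAtMost (truncConic F ∪ {![0, 1, 0]}) 2 v := by
    intro v h1 h2
    apply part1 q hF hq v
    · rintro ⟨hy, hz⟩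
      exact h1 ⟨v 0, by funext i; fin_cases i <;> simp [hy, hz]⟩
    · rintro ⟨hx, hy⟩
      exact h2 ⟨v 2, by funext i; fin_cases i <;> simp [hx, hy]⟩
  constructor
  · intro v _ h1 h2
    exact key v h1 h2
  · intro v _ h1
    by_cases h2 : ∃ c : F, v = c • ![0, 0, 1]
    · obtain ⟨c, hc⟩ := h2
      rw [hc]
      refine comb_one _ _ ?_ c
      right
      exact Set.mem_insert_iff.mpr (Or.inr rfl)
    · refine comb_mono _ _ ?_ 2 v (key v h1 h2)
      apply Set.union_subset_union_right
      intro w hw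
      exact Set.mem_insert_iff.mpr (Or.inl hw)
end

section
/- Let q be a prime power with q = 4 or q ≥ 7. The set S₁ ⊆ PG(3,q) of 2q+1 points given in homogeneous coordinates by S₁ = {(1,0,0,0)} ∪ {(1,a,0,0) : a ∈ F_q, a ≠ 0} ∪ {(0,1,a,a²) : a ∈ F_q, a ≠ 0} ∪ {(0,0,1,0), (0,0,0,1)} is a minimal 1-saturating set in PG(3,q). -/
/-- Every point of `PG(d-1,q)` (i.e. every nonzero vector of `F_q^d`) is a
linear combination of at most `k` vectors of `S`. -/
def SaturatesWithin {F : Type} [Field F] {d : ℕ} (S : Set (Fin d → F)) (k : ℕ) : Prop :=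
  ∀ v : Fin d → F, v ≠ 0 → IsCombOfAtMost S k v

/-- `S` is a `ρ`-saturating set: every point is a linear combination of at most
`ρ+1` points of `S`, and `ρ` is the smallest value with this property. -/
def IsSaturatingSet {F : Type} [Field F] {d : ℕ} (S : Set (Fin d → F)) (ρ : ℕ) : Prop :=
  SaturatesWithin S (ρ + 1) ∧ ∀ k < ρ + 1, ¬ SaturatesWithin S k

/-- `S` is a minimal `ρ`-saturating set: no proper subset of `S` is `ρ`-saturating. -/
def IsMinimalSaturatingSet {F : Type} [Field F] {d : ℕ} (S : Set (Fin d → F)) (ρ : ℕ) : Prop :=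
  IsSaturatingSet S ρ ∧ ∀ S' ⊂ S, ¬ IsSaturatingSet S' ρ

/-- The set `S₁ ⊆ PG(3,q)` of `2q+1` points of the "oval plus line" construction. -/
def setS1 (F : Type) [Field F] : Set (Fin 4 → F) :=
  {![1, 0, 0, 0]}
  ∪ {w | ∃ a : F, a ≠ 0 ∧ w = ![1, a, 0, 0]}
  ∪ {w | ∃ a : F, a ≠ 0 ∧ w = ![0, 1, a, a ^ 2]}
  ∪ {![0, 0, 1, 0], ![0, 0, 0, 1]}

section Saturation

variable {F : Type} [Field F] {d : ℕ} {S S' : Set (Fin d → F)} {k k' ρ : ℕ} {v : Fin d → F}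

theorem IsCombOfAtMost.mono (hS : S ⊆ S') (hk : k ≤ k') (h : IsCombOfAtMost S k v) :
    IsCombOfAtMost S' k' v :=
  let ⟨t, c, htS, htk, hv⟩ := h
  ⟨t, c, htS.trans hS, htk.trans hk, hv⟩

theorem SaturatesWithin.mono (hk : k ≤ k') (h : SaturatesWithin S k) : SaturatesWithin S k' :=
  fun v hv => (h v hv).mono le_rfl hk

theorem isSaturatingSet_iff :
    IsSaturatingSet S ρ ↔ SaturatesWithin S (ρ + 1) ∧ ¬ SaturatesWithin S ρ :=
  and_congr_right fun _ =>
    ⟨fun h => h ρ ρ.lt_succ_self, fun h _ hk hk' => h (hk'.mono (Nat.le_of_lt_succ hk))⟩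

theorem IsCombOfAtMost.exists_eq_smul (h : IsCombOfAtMost S 1 v) (hv : v ≠ 0) :
    ∃ s ∈ S, ∃ c : F, v = c • s := by
  obtain ⟨t, c, htS, ht, rfl⟩ := h
  obtain ht | ht := Nat.le_one_iff_eq_zero_or_eq_one.1 ht
  · simp [Finset.card_eq_zero.1 ht] at hv
  · obtain ⟨s, rfl⟩ := Finset.card_eq_one.1 ht
    exact ⟨s, htS (by simp), c s, by simp⟩

theorem IsCombOfAtMost.exists_eq_smul_add_smul (h : IsCombOfAtMost S 2 v) (hv : v ≠ 0) :
    ∃ s₁ ∈ S, ∃ s₂ ∈ S, ∃ c₁ c₂ : F, v = c₁ • s₁ + c₂ • s₂ := by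
  classical
  obtain ⟨t, c, htS, ht, rfl⟩ := h
  obtain ht | ht := Nat.le_succ_iff.1 ht
  · obtain ⟨s, hs, c, hv⟩ := IsCombOfAtMost.exists_eq_smul ⟨t, c, htS, ht, rfl⟩ hv
    exact ⟨s, hs, s, hs, c, 0, by simp [hv]⟩
  · obtain ⟨s₁, s₂, hne, rfl⟩ := Finset.card_eq_two.1 ht
    exact ⟨s₁, htS (by simp), s₂, htS (by simp), c s₁, c s₂, Finset.sum_pair hne⟩

theorem isCombOfAtMost_two_of_eq_smul_add_smul {s₁ s₂ : Fin d → F} {c₁ c₂ : F}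
    (h₁ : s₁ ∈ S) (h₂ : s₂ ∈ S) (hv : v = c₁ • s₁ + c₂ • s₂) : IsCombOfAtMost S 2 v := by
  classical
  by_cases hs : s₁ = s₂
  · subst hs
    refine ⟨{s₁}, fun _ => c₁ + c₂, by simpa using h₁, by simp, by simp [hv, add_smul]⟩
  · refine ⟨{s₁, s₂}, fun s => if s = s₁ then c₁ else c₂, ?_, Finset.card_le_two, ?_⟩
    · simp [Set.insert_subset_iff, h₁, h₂]
    · simp [Finset.sum_pair hs, Ne.symm hs, hv]

theorem isMinimalSaturatingSet_of_forall_mem (h : IsSaturatingSet S ρ)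
    (hS : ∀ P ∈ S, ∃ v ≠ 0, ¬ IsCombOfAtMost (S \ {P}) (ρ + 1) v) :
    IsMinimalSaturatingSet S ρ := by
  refine ⟨h, fun S' hS' hS'sat => ?_⟩
  obtain ⟨P, hPS, hPS'⟩ := Set.exists_of_ssubset hS'
  obtain ⟨v, hv, hnot⟩ := hS P hPS
  refine hnot ((hS'sat.1 v hv).mono (fun s hs => ⟨hS'.1 hs, ?_⟩) le_rfl)
  rintro rfl
  exact hPS' hs

end Saturation

section SetS1

variable {F : Type} [Field F]

theorem mem_setS1_iff {s : Fin 4 → F} :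
    s ∈ setS1 F ↔ (∃ a, s = ![1, a, 0, 0]) ∨ (∃ b ≠ 0, s = ![0, 1, b, b ^ 2]) ∨
      s = ![0, 0, 1, 0] ∨ s = ![0, 0, 0, 1] := by
  have hline : (s = ![1, 0, 0, 0] ∨ ∃ a ≠ 0, s = ![1, a, 0, 0]) ↔ ∃ a, s = ![1, a, 0, 0] :=
    ⟨by rintro (h | ⟨a, -, h⟩) <;> exact ⟨_, h⟩, fun ⟨a, ha⟩ =>
      (eq_or_ne a 0).imp (fun h => by rw [ha, h]) fun h => ⟨a, h, ha⟩⟩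
  simp only [setS1, Set.mem_union, Set.mem_singleton_iff, Set.mem_ofPred_eq, Set.mem_insert_iff,
    hline, or_assoc]

theorem conic_mem_setS1 {b : F} (hb : b ≠ 0) : ![0, 1, b, b ^ 2] ∈ setS1 F :=
  mem_setS1_iff.2 (Or.inr (Or.inl ⟨b, hb, rfl⟩))

theorem exists_eq_or_apply_zero_eq_zero_of_mem_setS1 {s : Fin 4 → F} (hs : s ∈ setS1 F) :
    (∃ a, s = ![1, a, 0, 0]) ∨ s 0 = 0 := by
  rcases mem_setS1_iff.1 hs with h | ⟨b, -, rfl⟩ | rfl | rfl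
  exacts [Or.inl h, Or.inr rfl, Or.inr rfl, Or.inr rfl]

theorem eq_of_mem_setS1_of_apply_zero_eq_zero {s : Fin 4 → F} (hs : s ∈ setS1 F)
    (hs0 : s 0 = 0) :
    (∃ b ≠ 0, s = ![0, 1, b, b ^ 2]) ∨ s = ![0, 0, 1, 0] ∨ s = ![0, 0, 0, 1] := by
  rcases mem_setS1_iff.1 hs with ⟨a, rfl⟩ | h
  · simp at hs0
  · exact h

theorem apply_two_ne_zero_or_apply_three_ne_zero_of_mem_setS1 {s : Fin 4 → F} (hs : s ∈ setS1 F)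
    (hs0 : s 0 = 0) : s 2 ≠ 0 ∨ s 3 ≠ 0 := by
  rcases eq_of_mem_setS1_of_apply_zero_eq_zero hs hs0 with ⟨b, hb, rfl⟩ | rfl | rfl
  exacts [Or.inl hb, by simp, by simp]

theorem eq_of_add_smul_eq_add_smul_setS1 {a a' c c' : F} {Q Q' : Fin 4 → F}
    (hQ : Q ∈ setS1 F) (hQ0 : Q 0 = 0) (hQ' : Q' ∈ setS1 F) (hQ'0 : Q' 0 = 0) (hc : c ≠ 0)
    (h : ![1, a, 0, 0] + c • Q = ![1, a', 0, 0] + c' • Q') : a = a' ∧ Q = Q' := by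
  have e1 := congrFun h 1
  have e2 := congrFun h 2
  have e3 := congrFun h 3
  rcases eq_of_mem_setS1_of_apply_zero_eq_zero hQ hQ0 with ⟨b, hb, rfl⟩ | rfl | rfl <;>
    rcases eq_of_mem_setS1_of_apply_zero_eq_zero hQ' hQ'0 with ⟨b', hb', rfl⟩ | rfl | rfl <;>
    simp only [Pi.add_apply, Pi.smul_apply, Matrix.cons_val, smul_eq_mul, mul_zero, mul_one,
      zero_add, add_zero] at e1 e2 e3
  · have hbb' : c * b * (b - b') = 0 := by linear_combination e3 - b' * e2
    obtain rfl : b = b' := by simpa [hc, hb, sub_eq_zero] using hbb'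
    obtain rfl : c = c' := mul_right_cancel₀ hb e2
    exact ⟨by linear_combination e1, rfl⟩
  · exact absurd e3 (by simp [hc, hb])
  · exact absurd e2 (by simp [hc, hb])
  · have hc' : c' = 0 := by simpa [hb'] using e3.symm
    exact absurd (e2.trans (by simp [hc'])) hc
  · exact ⟨e1, rfl⟩
  · exact absurd e2 hc
  · have hc' : c' = 0 := by simpa [hb'] using e2.symm
    exact absurd (e3.trans (by simp [hc'])) hc
  · exact absurd e3 hc
  · exact ⟨e1, rfl⟩

theorem exists_eq_add_smul_of_eq_smul_add_smul_setS1 {v s₁ s₂ : Fin 4 → F} {c₁ c₂ : F}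
    (h₁ : s₁ ∈ setS1 F) (h₂ : s₂ ∈ setS1 F) (hv : v = c₁ • s₁ + c₂ • s₂)
    (hv0 : v 0 = 1) (hv23 : v 2 ≠ 0 ∨ v 3 ≠ 0) :
    ∃ (a c : F) (Q : Fin 4 → F), Q ∈ setS1 F ∧ Q 0 = 0 ∧ v = ![1, a, 0, 0] + c • Q ∧
      ({s₁, s₂} : Set (Fin 4 → F)) = {![1, a, 0, 0], Q} := by
  have normalize : ∀ {a c₁ c₂ : F} {Q : Fin 4 → F}, Q 0 = 0 →
      v = c₁ • ![1, a, 0, 0] + c₂ • Q → v = ![1, a, 0, 0] + c₂ • Q := by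
    intro a c₁ c₂ Q hQ0 hv
    obtain rfl : c₁ = 1 := by simpa [hv, hQ0, -Matrix.cons_add] using hv0
    rwa [one_smul] at hv
  rcases exists_eq_or_apply_zero_eq_zero_of_mem_setS1 h₁ with ⟨a₁, rfl⟩ | h₁0 <;>
    rcases exists_eq_or_apply_zero_eq_zero_of_mem_setS1 h₂ with ⟨a₂, rfl⟩ | h₂0
  · simp [hv] at hv23
  · exact ⟨a₁, c₂, s₂, h₂, h₂0, normalize h₂0 hv, rfl⟩
  · exact ⟨a₂, c₁, s₁, h₁, h₁0, normalize h₁0 (hv.trans (add_comm _ _)), Set.pair_comm _ _⟩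
  · simp [hv, h₁0, h₂0] at hv0

theorem exists_not_isCombOfAtMost_two_diff_singleton {P : Fin 4 → F} (hP : P ∈ setS1 F) :
    ∃ v ≠ 0, ¬ IsCombOfAtMost (setS1 F \ {P}) 2 v := by
  obtain ⟨a₀, Q₀, hQ₀, hQ₀0, hP₀⟩ : ∃ a₀ Q₀, Q₀ ∈ setS1 F ∧ Q₀ 0 = 0 ∧
      P ∈ ({![1, a₀, 0, 0], Q₀} : Set (Fin 4 → F)) := by
    rcases exists_eq_or_apply_zero_eq_zero_of_mem_setS1 hP with ⟨a, rfl⟩ | hP0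
    · exact ⟨a, _, conic_mem_setS1 one_ne_zero, by simp, by simp⟩
    · exact ⟨0, P, hP, hP0, by simp⟩
  set v : Fin 4 → F := ![1, a₀, 0, 0] + (1 : F) • Q₀
  have hv0 : v 0 = 1 := by simp [v, hQ₀0, -Matrix.cons_add]
  have hv_ne : v ≠ 0 := fun h => by simp [h] at hv0
  refine ⟨v, hv_ne, fun hcomb => ?_⟩
  obtain ⟨s₁, hs₁, s₂, hs₂, c₁, c₂, hv⟩ := hcomb.exists_eq_smul_add_smul hv_ne
  have hv23 : v 2 ≠ 0 ∨ v 3 ≠ 0 := by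
    simpa [v, -Matrix.cons_add] using apply_two_ne_zero_or_apply_three_ne_zero_of_mem_setS1 hQ₀ hQ₀0
  obtain ⟨a, c, Q, hQ, hQ0, hvQ, hpair⟩ :=
    exists_eq_add_smul_of_eq_smul_add_smul_setS1 hs₁.1 hs₂.1 hv hv0 hv23
  obtain ⟨rfl, rfl⟩ := eq_of_add_smul_eq_add_smul_setS1 hQ₀ hQ₀0 hQ hQ0 one_ne_zero hvQ
  rw [← hpair] at hP₀
  rcases hP₀ with rfl | rfl
  exacts [hs₁.2 rfl, hs₂.2 rfl]

end SetS1

section Covering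

variable {F : Type} [Field F]

theorem exists_ne_zero_sq_ne [Fintype F] (hF : 4 ≤ Fintype.card F) (s : F) :
    ∃ b : F, b ≠ 0 ∧ b ^ 2 ≠ s := by
  classical
  by_contra! h
  have hs : s = 1 := by simpa using (h 1 one_ne_zero).symm
  have hsub : (Finset.univ : Finset F) ⊆ {0, 1, -1} := fun b _ => by
    rcases eq_or_ne b 0 with rfl | hb
    · simp
    · have := mul_self_eq_one_iff.1 (by rw [← sq, h b hb, hs] : b * b = 1)
      simpa using Or.inr this
  have := (Finset.card_le_card hsub).trans Finset.card_le_three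
  rw [Finset.card_univ] at this
  omega

/-- `(0, y, 0, w)` lies on the secant through `(0, 1, b, b²)` and `(0, 1, e, e²)` when
`b e = -w / y`; `b ≠ e` needs `b² ≠ -w / y`, which is where `q ≥ 4` enters. -/
theorem exists_conic_secant [Fintype F] (hF : 4 ≤ Fintype.card F) {y w : F} (hy : y ≠ 0)
    (hw : w ≠ 0) : ∃ b ≠ 0, ∃ e ≠ 0, ∃ c₁ c₂ : F,
      ![0, y, 0, w] = c₁ • ![0, 1, b, b ^ 2] + c₂ • ![0, 1, e, e ^ 2] := by
  obtain ⟨b, hb, hbs⟩ := exists_ne_zero_sq_ne hF (-w / y)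
  obtain ⟨e, he, hprod⟩ : ∃ e ≠ 0, y * (b * e) = -w :=
    ⟨-w / (y * b), div_ne_zero (neg_ne_zero.2 hw) (mul_ne_zero hy hb), by field_simp⟩
  have hbe : b - e ≠ 0 := by
    refine sub_ne_zero.2 fun h => hbs ?_
    rw [eq_div_iff hy, ← hprod, h]
    ring
  refine ⟨b, hb, e, he, -y * e / (b - e), y * b / (b - e), ?_⟩
  ext i
  fin_cases i <;> simp <;> field_simp
  · ring
  · ring
  · linear_combination (b - e) * hprod

theorem exists_mem_setS1_eq_smul_add_smul [Fintype F] (hF : 4 ≤ Fintype.card F)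
    (v : Fin 4 → F) : ∃ s₁ ∈ setS1 F, ∃ s₂ ∈ setS1 F, ∃ c₁ c₂ : F, v = c₁ • s₁ + c₂ • s₂ := by
  obtain ⟨x, y, z, w, rfl⟩ : ∃ x y z w : F, v = ![x, y, z, w] :=
    ⟨v 0, v 1, v 2, v 3, by ext i; fin_cases i <;> rfl⟩
  have hA (a : F) : ![1, a, 0, 0] ∈ setS1 F := mem_setS1_iff.2 (Or.inl ⟨a, rfl⟩)
  have hE : ![0, 0, 1, 0] ∈ setS1 F := by simp [setS1]
  have hF' : ![0, 0, 0, 1] ∈ setS1 F := by simp [setS1]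
  rcases eq_or_ne x 0 with rfl | hx
  · rcases eq_or_ne y 0 with rfl | hy
    · exact ⟨_, hE, _, hF', z, w, by ext i; fin_cases i <;> simp⟩
    rcases eq_or_ne z 0 with rfl | hz
    · rcases eq_or_ne w 0 with rfl | hw
      · exact ⟨_, hA 1, _, hA 0, y, -y, by ext i; fin_cases i <;> simp⟩
      · obtain ⟨b, hb, e, he, c₁, c₂, h⟩ := exists_conic_secant hF hy hw
        exact ⟨_, conic_mem_setS1 hb, _, conic_mem_setS1 he, c₁, c₂, h⟩
    · refine ⟨_, conic_mem_setS1 (div_ne_zero hz hy), _, hF', y, w - z ^ 2 / y, ?_⟩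
      ext i; fin_cases i <;> simp <;> field_simp
      ring
  · rcases eq_or_ne z 0 with rfl | hz
    · exact ⟨_, hA (y / x), _, hF', x, w, by ext i; fin_cases i <;> simp [hx, mul_div_cancel₀]⟩
    rcases eq_or_ne w 0 with rfl | hw
    · exact ⟨_, hA (y / x), _, hE, x, z, by ext i; fin_cases i <;> simp [hx, mul_div_cancel₀]⟩
    · refine ⟨_, hA ((y - z ^ 2 / w) / x), _, conic_mem_setS1 (div_ne_zero hw hz), x, z ^ 2 / w, ?_⟩
      ext i; fin_cases i <;> simp <;> field_simp
      ring

theorem not_saturatesWithin_one_setS1 : ¬ SaturatesWithin (setS1 F) 1 := by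
  intro h
  have hv : (![1, 0, 1, 0] : Fin 4 → F) ≠ 0 := fun h => by simpa using congrFun h 0
  obtain ⟨s, hs, c, hcs⟩ := (h _ hv).exists_eq_smul hv
  rcases exists_eq_or_apply_zero_eq_zero_of_mem_setS1 hs with ⟨a, rfl⟩ | hs0
  · simpa using congrFun hcs 2
  · simpa [hs0] using congrFun hcs 0

theorem saturatesWithin_two_setS1 [Fintype F] (hF : 4 ≤ Fintype.card F) :
    SaturatesWithin (setS1 F) 2 := fun v _ =>
  let ⟨_, h₁, _, h₂, _, _, hv⟩ := exists_mem_setS1_eq_smul_add_smul hF v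
  isCombOfAtMost_two_of_eq_smul_add_smul h₁ h₂ hv

end Covering

section Card

variable {F : Type} [Field F]

theorem setS1_eq_range_union :
    setS1 F = Set.range (fun a : F => ![1, a, 0, 0]) ∪
      (fun b : F => ![0, 1, b, b ^ 2]) '' {0}ᶜ ∪ {![0, 0, 1, 0], ![0, 0, 0, 1]} := by
  ext s
  simp only [mem_setS1_iff, Set.mem_union, Set.mem_range, Set.mem_image,
    Set.mem_compl_singleton_iff, Set.mem_insert_iff, Set.mem_singleton_iff, or_assoc, @eq_comm _ s]

theorem ncard_setS1 [Fintype F] : (setS1 F).ncard = 2 * Fintype.card F + 1 := by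
  have hline : Function.Injective fun a : F => ![1, a, 0, 0] :=
    fun a b h => by simpa using congrFun h 1
  have hconic : Function.Injective fun b : F => ![0, 1, b, b ^ 2] :=
    fun a b h => by simpa using congrFun h 2
  have hdisj₁ : Disjoint (Set.range fun a : F => ![1, a, 0, 0])
      ((fun b : F => ![0, 1, b, b ^ 2]) '' {0}ᶜ) := by
    refine Set.disjoint_left.2 ?_
    rintro _ ⟨a, rfl⟩ ⟨b, -, h⟩
    simpa using congrFun h 0
  have hdisj₂ : Disjoint (Set.range (fun a : F => ![1, a, 0, 0]) ∪
      (fun b : F => ![0, 1, b, b ^ 2]) '' {0}ᶜ) {![0, 0, 1, 0], ![0, 0, 0, 1]} := by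
    refine Set.disjoint_left.2 ?_
    rintro _ (⟨a, rfl⟩ | ⟨b, -, rfl⟩) (h | h)
    all_goals first | simpa using congrFun h 0 | simpa using congrFun h 1
  have hpair : ({![0, 0, 1, 0], ![0, 0, 0, 1]} : Set (Fin 4 → F)).ncard = 2 :=
    Set.ncard_pair fun h => by simpa using congrFun h 2
  rw [setS1_eq_range_union, Set.ncard_union_eq hdisj₂, Set.ncard_union_eq hdisj₁,
    Set.ncard_range_of_injective hline, Set.ncard_image_of_injective _ hconic, Set.ncard_compl,
    Set.ncard_singleton, hpair, Nat.card_eq_fintype_card]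
  have := Fintype.card_pos (α := F)
  omega

end Card

/-- for a prime power `q = 4` or `q ≥ 7`, the `(2q+1)`-set `S₁` is a
minimal `1`-saturating set in `PG(3,q)`. -/
theorem stmt8 (q : ℕ) (F : Type) [Field F] [Fintype F] (hF : Fintype.card F = q)
    (hq : q = 4 ∨ 7 ≤ q) :
    IsMinimalSaturatingSet (setS1 F) 1 ∧ (setS1 F).ncard = 2 * q + 1 := by
  have h4 : 4 ≤ Fintype.card F := by omega
  have hsat : IsSaturatingSet (setS1 F) 1 :=
    isSaturatingSet_iff.2 ⟨saturatesWithin_two_setS1 h4, not_saturatesWithin_one_setS1⟩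
  exact ⟨isMinimalSaturatingSet_of_forall_mem hsat
    fun _ hP => exists_not_isCombOfAtMost_two_diff_singleton hP, hF ▸ ncard_setS1⟩
end

section
/- Let q be a prime power with q = 4 or q ≥ 7, and let ρ ≥ 0 be an integer. Then the set S_ρ ∖ {A_ρ^∞} of size (ρ+1)q, obtained from Construction S by removing the point A_ρ^∞ = (0,…,0,1), is a (ρ+1)-saturating set in PG(2ρ+1, q). -/
/-- The unit vector of `F^N` whose only nonzero coordinate is a `1` in
position `k` (positions numbered from `0`). -/
def unitV (F : Type) [Field F] (N k : ℕ) : Fin N → F :=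
  fun i => if (i : ℕ) = k then 1 else 0

/-- Construction S ("Line+Ovals") in `PG(2ρ+1,q)`: the point `A₀⁰ = (1,0,…,0)`,
the truncated line `L₀* = {(1,a,0,…,0) : a ≠ 0}`, for each `u = 1,…,ρ` the
truncated conic `C_u*` (with `1` in position `2u-1`, `a` in position `2u`,
`a²` in position `2u+1`) and the point `T_u` (a `1` in position `2u`), and the
point `A_ρ^∞ = (0,…,0,1)`. -/
def constructionS (F : Type) [Field F] (ρ : ℕ) : Set (Fin (2 * ρ + 2) → F) :=
  {unitV F (2 * ρ + 2) 0}
  ∪ {w | ∃ a : F, a ≠ 0 ∧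
      w = fun i : Fin (2 * ρ + 2) => if (i : ℕ) = 0 then 1 else if (i : ℕ) = 1 then a else 0}
  ∪ {w | ∃ u : ℕ, 1 ≤ u ∧ u ≤ ρ ∧ ∃ a : F, a ≠ 0 ∧
      w = fun i : Fin (2 * ρ + 2) => if (i : ℕ) = 2 * u - 1 then 1 else if (i : ℕ) = 2 * u then a
            else if (i : ℕ) = 2 * u + 1 then a ^ 2 else 0}
  ∪ {w | ∃ u : ℕ, 1 ≤ u ∧ u ≤ ρ ∧ w = unitV F (2 * ρ + 2) (2 * u)}
  ∪ {unitV F (2 * ρ + 2) (2 * ρ + 1)}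

/-!
A vector of `F^{2ρ+4}` is a vector `u` of `F^{2ρ+2}` (coordinates `0, …, 2ρ+1`) plus a vector
`(s, e, z)` in the coordinates `2ρ+1, 2ρ+2, 2ρ+3` spanned by the new block `T_{ρ+1}`, `C*_{ρ+1}`.
Since coordinate `2ρ+1` is shared, its value can be split freely between `u` and the block. In the
plane of the block, `(e²/z, e, z)` with `e ≠ 0` is a multiple of one block point, `(s, 0, z)` with
`s, z ≠ 0` is a combination of two (this needs `q ≥ 4`) and `(0, 0, z)` of three. An induction on `ρ`
then shows that every vector is a combination of `ρ + 2` points, carrying along the statement that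
every `v` is a combination of `ρ + 1` points or some `v + c A^∞` with `c ≠ 0` one of `ρ` points.

For the lower bound, every point of the set has exactly one nonzero even coordinate, so
`e₀ + e₂ + ⋯ + e_{2ρ-2} + A^∞` needs one point of each block `0, …, ρ-1` and two points of block `ρ`,
which must cancel in coordinate `2ρ` while producing coordinate `2ρ+1`.
-/

theorem isCombOfAtMost_iff_exists_mem_span {F : Type} [Field F] {d k : ℕ}
    {S : Set (Fin d → F)} {v : Fin d → F} :
    IsCombOfAtMost S k v ↔
      ∃ t : Finset (Fin d → F), ↑t ⊆ S ∧ t.card ≤ k ∧ v ∈ Submodule.span F (t : Set _) := by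
  constructor
  · rintro ⟨t, c, htS, htk, rfl⟩
    exact ⟨t, htS, htk, Submodule.sum_mem _ fun w hw =>
      Submodule.smul_mem _ _ (Submodule.subset_span hw)⟩
  · rintro ⟨t, htS, htk, hv⟩
    obtain ⟨c, -, hc⟩ := Submodule.mem_span_finset.1 hv
    exact ⟨t, c, htS, htk, hc.symm⟩

namespace IsCombOfAtMost

variable {F : Type} [Field F] {d : ℕ} {S : Set (Fin d → F)} {k m : ℕ} {v w : Fin d → F}

theorem zero : IsCombOfAtMost S k 0 := ⟨∅, 0, by simp⟩

theorem mono_s11 (h : IsCombOfAtMost S k v) (hkm : k ≤ m) : IsCombOfAtMost S m v := by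
  obtain ⟨t, c, htS, htk, hv⟩ := h
  exact ⟨t, c, htS, htk.trans hkm, hv⟩

theorem smul_of_mem (hw : w ∈ S) (c : F) : IsCombOfAtMost S 1 (c • w) :=
  isCombOfAtMost_iff_exists_mem_span.2 ⟨{w}, by simpa using hw, by simp,
    Submodule.smul_mem _ _ (Submodule.subset_span (by simp))⟩

theorem add (hv : IsCombOfAtMost S k v) (hw : IsCombOfAtMost S m w) :
    IsCombOfAtMost S (k + m) (v + w) := by
  classical
  obtain ⟨t, htS, htk, hv⟩ := isCombOfAtMost_iff_exists_mem_span.1 hv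
  obtain ⟨t', htS', htm, hw⟩ := isCombOfAtMost_iff_exists_mem_span.1 hw
  refine isCombOfAtMost_iff_exists_mem_span.2 ⟨t ∪ t', by simpa using ⟨htS, htS'⟩,
    (Finset.card_union_le t t').trans (add_le_add htk htm), ?_⟩
  rw [Finset.coe_union]
  exact add_mem (Submodule.span_mono Set.subset_union_left hv)
    (Submodule.span_mono Set.subset_union_right hw)

theorem map {d' : ℕ} {S' : Set (Fin d' → F)} (f : (Fin d → F) →ₗ[F] (Fin d' → F))
    (hf : f '' S ⊆ S') (hv : IsCombOfAtMost S k v) : IsCombOfAtMost S' k (f v) := by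
  classical
  obtain ⟨t, htS, htk, hv⟩ := isCombOfAtMost_iff_exists_mem_span.1 hv
  refine isCombOfAtMost_iff_exists_mem_span.2 ⟨t.image f, ?_, Finset.card_image_le.trans htk, ?_⟩
  · rw [Finset.coe_image]; exact (Set.image_mono htS).trans hf
  · rw [Finset.coe_image]; exact Submodule.apply_mem_span_image_of_mem_span f hv

end IsCombOfAtMost

theorem SaturatesWithin.isCombOfAtMost {F : Type} [Field F] {d k : ℕ} {S : Set (Fin d → F)}
    (h : SaturatesWithin S k) (v : Fin d → F) : IsCombOfAtMost S k v := by
  rcases eq_or_ne v 0 with rfl | hv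
  · exact IsCombOfAtMost.zero
  · exact h v hv

theorem exists_ne_apply_ne_zero_of_sum_eq_zero {ι M : Type*} [AddCommMonoid M] {s : Finset ι}
    {f : ι → M} (hs : ∑ i ∈ s, f i = 0) {a : ι} (ha : a ∈ s) (hfa : f a ≠ 0) :
    ∃ b ∈ s, b ≠ a ∧ f b ≠ 0 := by
  by_contra! h
  exact hfa (by rwa [Finset.sum_eq_single_of_mem a ha h] at hs)

section ConicBlock

variable {F : Type} [Field F]

open IsCombOfAtMost

theorem exists_three_ne_zero [Fintype F] (hF : 4 ≤ Fintype.card F) :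
    ∃ a b c : F, a ≠ 0 ∧ b ≠ 0 ∧ c ≠ 0 ∧ a ≠ b ∧ a ≠ c ∧ b ≠ c := by
  classical
  have hcard : 2 < (Finset.univ.erase (0 : F)).card := by
    rw [Finset.card_erase_of_mem (Finset.mem_univ _), Finset.card_univ]; omega
  obtain ⟨a, ha, b, hb, c, hc, hab, hac, hbc⟩ := Finset.two_lt_card.1 hcard
  exact ⟨a, b, c, Finset.ne_of_mem_erase ha, Finset.ne_of_mem_erase hb,
    Finset.ne_of_mem_erase hc, hab, hac, hbc⟩

theorem exists_ne_mul_eq [Fintype F] (hF : 4 ≤ Fintype.card F) {m : F} (hm : m ≠ 0) :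
    ∃ a b : F, a ≠ 0 ∧ b ≠ 0 ∧ a ≠ b ∧ a * b = m := by
  obtain ⟨a, b, c, ha, hb, hc, hab, hac, hbc⟩ := exists_three_ne_zero hF
  -- `m` has at most two square roots, so one of `a, b, c` is not among them
  obtain ⟨x, hx, hxm⟩ : ∃ x : F, x ≠ 0 ∧ x ^ 2 ≠ m := by
    by_contra! h
    have hb' := sq_eq_sq_iff_eq_or_eq_neg.1 ((h b hb).trans (h a ha).symm)
    have hc' := sq_eq_sq_iff_eq_or_eq_neg.1 ((h c hc).trans (h a ha).symm)
    grind
  refine ⟨x, m / x, hx, div_ne_zero hm hx, fun h => hxm ?_, mul_div_cancel₀ m hx⟩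
  rw [sq]; nth_rw 2 [h]; exact mul_div_cancel₀ m hx

/-- The new points `T_{ρ+1}` and `C*_{ρ+1}` of `S_{ρ+1}`, read in the coordinates
`2ρ+1, 2ρ+2, 2ρ+3`. -/
def conicBlock (F : Type) [Field F] : Set (Fin 3 → F) :=
  insert ![0, 1, 0] {b | ∃ a : F, a ≠ 0 ∧ b = ![1, a, a ^ 2]}

theorem conic_mem_conicBlock {a : F} (ha : a ≠ 0) : ![1, a, a ^ 2] ∈ conicBlock F :=
  Or.inr ⟨a, ha, rfl⟩

theorem isCombOfAtMost_conicBlock_zero : IsCombOfAtMost (conicBlock F) 0 ![0, 0, 0] := by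
  convert zero using 1
  ext i; fin_cases i <;> rfl

/-- For `z = 0` (where `e ^ 2 / 0 = 0`) the vector is a multiple of `(0, 1, 0)`. -/
theorem isCombOfAtMost_conicBlock_one {e : F} (he : e ≠ 0) (z : F) :
    IsCombOfAtMost (conicBlock F) 1 ![e ^ 2 / z, e, z] := by
  rcases eq_or_ne z 0 with rfl | hz
  · rw [show ![e ^ 2 / 0, e, 0] = e • ![0, 1, 0] by ext i; fin_cases i <;> simp]
    exact smul_of_mem (Set.mem_insert _ _) e
  · convert smul_of_mem (conic_mem_conicBlock (div_ne_zero hz he)) (e ^ 2 / z) using 1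
    ext i; fin_cases i <;> simp <;> field_simp

theorem isCombOfAtMost_conicBlock_two [Fintype F] (hF : 4 ≤ Fintype.card F) {s z : F}
    (hs : s ≠ 0) (hz : z ≠ 0) : IsCombOfAtMost (conicBlock F) 2 ![s, 0, z] := by
  obtain ⟨a, b, ha, hb, hab, hm⟩ := exists_ne_mul_eq hF (div_ne_zero (neg_ne_zero.2 hz) hs)
  obtain rfl : z = -(s * (a * b)) := by rw [hm]; field_simp
  have := sub_ne_zero.2 hab
  have := sub_ne_zero.2 hab.symm
  convert (smul_of_mem (conic_mem_conicBlock ha) (s * b / (b - a))).add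
    (smul_of_mem (conic_mem_conicBlock hb) (s * a / (a - b))) using 1
  ext i; fin_cases i <;> simp <;> field_simp <;> ring

theorem isCombOfAtMost_conicBlock_three [Fintype F] (hF : 4 ≤ Fintype.card F) (z : F) :
    IsCombOfAtMost (conicBlock F) 3 ![0, 0, z] := by
  obtain ⟨a, b, c, ha, hb, hc, hab, hac, hbc⟩ := exists_three_ne_zero hF
  have := sub_ne_zero.2 hab
  have := sub_ne_zero.2 hac
  have := sub_ne_zero.2 hbc
  have := sub_ne_zero.2 hab.symm
  have := sub_ne_zero.2 hac.symm
  have := sub_ne_zero.2 hbc.symm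
  convert ((smul_of_mem (conic_mem_conicBlock ha) (z / ((a - b) * (a - c)))).add
    (smul_of_mem (conic_mem_conicBlock hb) (z / ((b - a) * (b - c))))).add
    (smul_of_mem (conic_mem_conicBlock hc) (z / ((c - a) * (c - b)))) using 1
  ext i; fin_cases i <;> simp <;> field_simp <;> ring

end ConicBlock

namespace ConstructionS

variable {F : Type} [Field F] {ρ : ℕ}

open IsCombOfAtMost

def aInf (F : Type) [Field F] (ρ : ℕ) : Fin (2 * ρ + 2) → F := unitV F (2 * ρ + 2) (2 * ρ + 1)

def punctured (F : Type) [Field F] (ρ : ℕ) : Set (Fin (2 * ρ + 2) → F) :=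
  constructionS F ρ \ {aInf F ρ}

open Classical in
/-- Block `0` is the full line `{(1, a, 0, …, 0)}` (`a = 0` gives `A₀⁰`); block `u ≥ 1` consists
of `T_u` (for `a = 0`) and the points of `C_u*`. -/
noncomputable def point (F : Type) [Field F] (ρ u : ℕ) (a : F) (i : Fin (2 * ρ + 2)) : F :=
  if u = 0 then (if (i : ℕ) = 0 then 1 else if (i : ℕ) = 1 then a else 0)
  else if a = 0 then (if (i : ℕ) = 2 * u then 1 else 0)
  else if (i : ℕ) = 2 * u - 1 then 1 else if (i : ℕ) = 2 * u then a
    else if (i : ℕ) = 2 * u + 1 then a ^ 2 else 0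

theorem point_apply_ne_zero_of_even {u : ℕ} (a : F) {i : Fin (2 * ρ + 2)} (hi : Even (i : ℕ)) :
    point F ρ u a i ≠ 0 ↔ (i : ℕ) = 2 * u := by
  obtain ⟨n, hn⟩ := hi
  simp only [point]
  split_ifs <;> simp_all <;> omega

theorem point_apply_last_ne_zero {u : ℕ} (hu : u ≤ ρ) {a : F}
    (h : point F ρ u a ⟨2 * ρ + 1, by omega⟩ ≠ 0) : u = ρ := by
  simp only [point] at h
  split_ifs at h <;> simp_all <;> omega

theorem point_ne_aInf {u : ℕ} (hu : u ≤ ρ) (a : F) : point F ρ u a ≠ aInf F ρ := by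
  intro h
  have := congrFun h ⟨2 * u, by omega⟩
  rw [aInf, unitV, if_neg (by simp; omega)] at this
  exact (point_apply_ne_zero_of_even a (i := ⟨2 * u, by omega⟩) (by simp)).2 rfl this

theorem mem_punctured_iff {w : Fin (2 * ρ + 2) → F} :
    w ∈ punctured F ρ ↔ ∃ u ≤ ρ, ∃ a, point F ρ u a = w := by
  constructor
  · rintro ⟨(((rfl | ⟨a, -, rfl⟩) | ⟨u, hu, huρ, a, ha, rfl⟩) | ⟨u, hu, huρ, rfl⟩) | h, hA⟩
    · refine ⟨0, Nat.zero_le _, 0, funext fun i => ?_⟩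
      simp only [point, unitV]; split_ifs <;> rfl
    · exact ⟨0, Nat.zero_le _, a, funext fun i => by simp [point]⟩
    · refine ⟨u, huρ, a, funext fun i => ?_⟩
      simp [point, ha, show u ≠ 0 by omega]
    · refine ⟨u, huρ, 0, funext fun i => ?_⟩
      simp [point, unitV, show u ≠ 0 by omega]
    · exact absurd h hA
  · rintro ⟨u, hu, a, rfl⟩
    refine ⟨?_, point_ne_aInf hu a⟩
    by_cases hu0 : u = 0
    · by_cases ha : a = 0
      · subst hu0 ha
        refine Or.inl (Or.inl (Or.inl (Or.inl (funext fun i => ?_))))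
        simp only [point, unitV]; split_ifs <;> rfl
      · exact Or.inl (Or.inl (Or.inl (Or.inr ⟨a, ha, funext fun i => by simp [point, hu0]⟩)))
    · by_cases ha : a = 0
      · refine Or.inl (Or.inr ⟨u, by omega, hu, funext fun i => ?_⟩)
        simp [point, unitV, hu0, ha]
      · exact Or.inl (Or.inl (Or.inr ⟨u, by omega, hu, a, ha, funext fun i => by
          simp [point, hu0, ha]⟩))

theorem point_inj_of_le {u u' : ℕ} (hu : u ≤ ρ) (hu' : u' ≤ ρ) {a a' : F}
    (h : point F ρ u a = point F ρ u' a') : u = u' ∧ a = a' := by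
  have h2u := (point_apply_ne_zero_of_even (ρ := ρ) a (i := ⟨2 * u, by omega⟩) (by simp)).2 rfl
  rw [h, point_apply_ne_zero_of_even a' (by simp)] at h2u
  obtain rfl : u = u' := by simp at h2u; omega
  refine ⟨rfl, ?_⟩
  by_cases hu0 : u = 0
  · simpa [point, hu0] using congrFun h ⟨1, by omega⟩
  · have h1 := congrFun h ⟨2 * u - 1, by omega⟩
    have h2 := congrFun h ⟨2 * u, by omega⟩
    simp only [point, hu0, if_false, if_true, show 2 * u - 1 ≠ 2 * u by omega,
      show 2 * u ≠ 2 * u - 1 by omega] at h1 h2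
    by_cases ha : a = 0 <;> by_cases ha' : a' = 0 <;> simp_all

theorem ncard_punctured [Fintype F] : (punctured F ρ).ncard = (ρ + 1) * Fintype.card F := by
  classical
  have : punctured F ρ =
      ((Finset.range (ρ + 1)) ×ˢ Finset.univ).image (fun p : ℕ × F => point F ρ p.1 p.2) := by
    ext w; simp [mem_punctured_iff]
  rw [this, Set.ncard_coe_finset, Finset.card_image_of_injOn, Finset.card_product,
    Finset.card_range, Finset.card_univ]
  rintro ⟨u, a⟩ hu ⟨u', a'⟩ hu' h
  simp only [Finset.coe_product, Set.mem_prod, Finset.mem_coe, Finset.mem_range] at hu hu'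
  obtain ⟨rfl, rfl⟩ := point_inj_of_le (by omega) (by omega) h
  rfl

theorem eq_of_apply_ne_zero_of_even {w : Fin (2 * ρ + 2) → F} (hw : w ∈ punctured F ρ)
    {i j : Fin (2 * ρ + 2)} (hi : Even (i : ℕ)) (hj : Even (j : ℕ)) (hwi : w i ≠ 0)
    (hwj : w j ≠ 0) : i = j := by
  obtain ⟨u, -, a, rfl⟩ := mem_punctured_iff.1 hw
  exact Fin.ext (((point_apply_ne_zero_of_even a hi).1 hwi).trans
    ((point_apply_ne_zero_of_even a hj).1 hwj).symm)

theorem apply_ne_zero_of_apply_last_ne_zero {w : Fin (2 * ρ + 2) → F} (hw : w ∈ punctured F ρ)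
    (h : w ⟨2 * ρ + 1, by omega⟩ ≠ 0) : w ⟨2 * ρ, by omega⟩ ≠ 0 := by
  obtain ⟨u, hu, a, rfl⟩ := mem_punctured_iff.1 hw
  obtain rfl := point_apply_last_ne_zero hu h
  exact (point_apply_ne_zero_of_even a (by simp)).2 rfl

open Classical in
theorem sum_card_filter_apply_even_le {t : Finset (Fin (2 * ρ + 2) → F)}
    (ht : ↑t ⊆ punctured F ρ) (c : (Fin (2 * ρ + 2) → F) → F) :
    ∑ u : Fin (ρ + 1), (t.filter fun w => c w * w ⟨2 * u, by omega⟩ ≠ 0).card ≤ t.card := by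
  classical
  rw [← Finset.card_biUnion]
  · exact Finset.card_le_card (Finset.biUnion_subset.2 fun u _ => Finset.filter_subset _ _)
  · intro u _ u' _ huu'
    refine Finset.disjoint_filter.2 fun w hw h h' => huu' ?_
    have := eq_of_apply_ne_zero_of_even (ht hw) (by simp) (by simp) (right_ne_zero_of_mul h)
      (right_ne_zero_of_mul h')
    ext; simp only [Fin.mk.injEq] at this; omega

def liftLevel (ρ : ℕ) : (Fin (2 * ρ + 2) → F) →ₗ[F] (Fin (2 * (ρ + 1) + 2) → F) where
  toFun v i := if h : (i : ℕ) < 2 * ρ + 2 then v ⟨i, h⟩ else 0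
  map_add' v w := by ext i; by_cases h : (i : ℕ) < 2 * ρ + 2 <;> simp [h]
  map_smul' c v := by ext i; by_cases h : (i : ℕ) < 2 * ρ + 2 <;> simp [h]

def topBlock (ρ : ℕ) : (Fin 3 → F) →ₗ[F] (Fin (2 * (ρ + 1) + 2) → F) where
  toFun b i := if (i : ℕ) = 2 * ρ + 1 then b 0 else if (i : ℕ) = 2 * ρ + 2 then b 1
    else if (i : ℕ) = 2 * ρ + 3 then b 2 else 0
  map_add' v w := by ext i; simp only [Pi.add_apply]; split_ifs <;> simp
  map_smul' c v := by ext i; simp only [Pi.smul_apply]; split_ifs <;> simp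

theorem exists_eq_liftLevel_add_topBlock (v : Fin (2 * (ρ + 1) + 2) → F) :
    ∃ u e z, v = liftLevel ρ u + topBlock ρ ![0, e, z] := by
  refine ⟨fun i => v (Fin.castLE (by omega) i), v ⟨2 * ρ + 2, by omega⟩,
    v ⟨2 * ρ + 3, by omega⟩, ?_⟩
  ext ⟨n, hn⟩
  simp only [liftLevel, topBlock, LinearMap.coe_mk, AddHom.coe_mk, Pi.add_apply]
  obtain h | rfl | rfl | rfl : n < 2 * ρ + 1 ∨ n = 2 * ρ + 1 ∨ n = 2 * ρ + 2 ∨ n = 2 * ρ + 3 := by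
    omega
  · rw [dif_pos (by omega), if_neg (by omega), if_neg (by omega), if_neg (by omega), add_zero]
    rfl
  · rw [dif_pos (by omega), if_pos rfl]
    simp
  · rw [dif_neg (by omega), if_neg (by omega), if_pos rfl]
    simp
  · rw [dif_neg (by omega), if_neg (by omega), if_neg (by omega), if_pos rfl]
    simp

theorem liftLevel_point {u : ℕ} (hu : u ≤ ρ) (a : F) :
    liftLevel ρ (point F ρ u a) = point F (ρ + 1) u a := by
  ext ⟨n, hn⟩
  simp only [liftLevel, point, LinearMap.coe_mk, AddHom.coe_mk]
  split_ifs <;> (try simp) <;> omega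

theorem liftLevel_aInf : liftLevel ρ (aInf F ρ) = topBlock ρ ![1, 0, 0] := by
  ext ⟨n, hn⟩
  simp only [liftLevel, topBlock, aInf, unitV, LinearMap.coe_mk, AddHom.coe_mk]
  split_ifs <;> simp
  omega

theorem aInf_succ : aInf F (ρ + 1) = topBlock ρ ![0, 0, 1] := by
  ext ⟨n, hn⟩
  simp only [topBlock, aInf, unitV, LinearMap.coe_mk, AddHom.coe_mk]
  split_ifs <;> simp <;> omega

theorem liftLevel_image_punctured : liftLevel ρ '' punctured F ρ ⊆ punctured F (ρ + 1) := by
  rintro _ ⟨w, hw, rfl⟩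
  obtain ⟨u, hu, a, rfl⟩ := mem_punctured_iff.1 hw
  exact mem_punctured_iff.2 ⟨u, by omega, a, (liftLevel_point hu a).symm⟩

theorem topBlock_image_conicBlock : topBlock ρ '' conicBlock F ⊆ punctured F (ρ + 1) := by
  rintro _ ⟨b, hb | ⟨a, ha, rfl⟩, rfl⟩
  · refine mem_punctured_iff.2 ⟨ρ + 1, le_rfl, 0, ?_⟩
    rw [Set.mem_singleton_iff.1 hb]
    ext ⟨n, hn⟩
    simp only [topBlock, point, LinearMap.coe_mk, AddHom.coe_mk]
    split_ifs <;> simp_all <;> omega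
  · refine mem_punctured_iff.2 ⟨ρ + 1, le_rfl, a, ?_⟩
    ext ⟨n, hn⟩
    simp only [topBlock, point, LinearMap.coe_mk, AddHom.coe_mk]
    split_ifs <;> simp_all <;> omega

/-- The part `s` of the shared coordinate `2ρ+1` is produced by the new block instead of `S_ρ`. -/
theorem isCombOfAtMost_liftLevel_add_topBlock {k m : ℕ} {u : Fin (2 * ρ + 2) → F} {s e z : F}
    (hu : IsCombOfAtMost (punctured F ρ) k (u - s • aInf F ρ))
    (hb : IsCombOfAtMost (conicBlock F) m ![s, e, z]) :
    IsCombOfAtMost (punctured F (ρ + 1)) (k + m) (liftLevel ρ u + topBlock ρ ![0, e, z]) := by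
  have hsez : ![s, e, z] = s • ![1, 0, 0] + ![0, e, z] := by ext i; fin_cases i <;> simp
  convert (hu.map _ liftLevel_image_punctured).add (hb.map _ topBlock_image_conicBlock) using 1
  rw [hsez, map_sub, map_smul, liftLevel_aInf, map_add, map_smul]
  abel

def AlongAInf (F : Type) [Field F] (ρ : ℕ) : Prop :=
  ∀ v, IsCombOfAtMost (punctured F ρ) (ρ + 1) v ∨
    ∃ c : F, c ≠ 0 ∧ IsCombOfAtMost (punctured F ρ) ρ (v + c • aInf F ρ)

theorem AlongAInf.isCombOfAtMost_or_exists (h : AlongAInf F ρ) (v : Fin (2 * ρ + 2) → F) :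
    IsCombOfAtMost (punctured F ρ) ρ v ∨
      ∃ c : F, c ≠ 0 ∧ IsCombOfAtMost (punctured F ρ) (ρ + 1) (v + c • aInf F ρ) := by
  rcases h (v + aInf F ρ) with h | ⟨c, -, h⟩
  · exact Or.inr ⟨1, one_ne_zero, by rwa [one_smul]⟩
  · rw [show v + aInf F ρ + c • aInf F ρ = v + (1 + c) • aInf F ρ by module] at h
    rcases eq_or_ne (1 + c) 0 with hc | hc
    · rw [hc] at h
      exact Or.inl (by simpa using h)
    · exact Or.inr ⟨1 + c, hc, h.mono_s11 (Nat.le_succ ρ)⟩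

theorem saturatesWithin_punctured_succ [Fintype F] (hF : 4 ≤ Fintype.card F)
    (hD : SaturatesWithin (punctured F ρ) (ρ + 2)) (hN : AlongAInf F ρ) :
    SaturatesWithin (punctured F (ρ + 1)) (ρ + 1 + 2) := by
  intro v _
  obtain ⟨u, e, z, rfl⟩ := exists_eq_liftLevel_add_topBlock v
  rcases eq_or_ne e 0 with rfl | he
  · rcases eq_or_ne z 0 with rfl | hz
    · refine (isCombOfAtMost_liftLevel_add_topBlock (k := ρ + 2) (s := 0) ?_
        isCombOfAtMost_conicBlock_zero).mono_s11 (by omega)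
      simpa using hD.isCombOfAtMost u
    · rcases hN.isCombOfAtMost_or_exists u with h | ⟨c, hc, h⟩
      · refine (isCombOfAtMost_liftLevel_add_topBlock (k := ρ) (s := 0) ?_
          (isCombOfAtMost_conicBlock_three hF z)).mono_s11 (by omega)
        simpa using h
      · refine isCombOfAtMost_liftLevel_add_topBlock (k := ρ + 1) (s := -c) ?_
          (isCombOfAtMost_conicBlock_two hF (neg_ne_zero.2 hc) hz)
        simpa using h
  · exact (isCombOfAtMost_liftLevel_add_topBlock (k := ρ + 2) (hD.isCombOfAtMost _)
      (isCombOfAtMost_conicBlock_one he z)).mono_s11 (by omega)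

theorem alongAInf_succ [Fintype F] (hF : 4 ≤ Fintype.card F)
    (hD : SaturatesWithin (punctured F ρ) (ρ + 2)) (hN : AlongAInf F ρ) :
    AlongAInf F (ρ + 1) := by
  intro v
  obtain ⟨u, e, z, rfl⟩ := exists_eq_liftLevel_add_topBlock v
  have hshift (c : F) : liftLevel ρ u + topBlock ρ ![0, e, z] + c • aInf F (ρ + 1) =
      liftLevel ρ u + topBlock ρ ![0, e, z + c] := by
    rw [aInf_succ, add_assoc, ← map_smul, ← map_add]
    congr 2
    ext i; fin_cases i <;> simp
  rcases eq_or_ne e 0 with rfl | he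
  · rcases eq_or_ne z 0 with rfl | hz
    · refine Or.inl (isCombOfAtMost_liftLevel_add_topBlock (s := 0) (m := 0) ?_
        isCombOfAtMost_conicBlock_zero)
      simpa using hD.isCombOfAtMost u
    rcases hN u with h | ⟨c, hc, h⟩
    · refine Or.inr ⟨-z, neg_ne_zero.2 hz, ?_⟩
      rw [hshift, add_neg_cancel]
      refine isCombOfAtMost_liftLevel_add_topBlock (s := 0) (m := 0) ?_
        isCombOfAtMost_conicBlock_zero
      simpa using h
    · refine Or.inl (isCombOfAtMost_liftLevel_add_topBlock (k := ρ) (s := -c) ?_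
        (isCombOfAtMost_conicBlock_two hF (neg_ne_zero.2 hc) hz))
      simpa using h
  -- `x ↦ e² / x` is an involution of `F` (also at `0`), so every `z` is reached by a cone point
  have hinv (x : F) : e ^ 2 / (e ^ 2 / x) = x := div_div_cancel₀ (pow_ne_zero 2 he)
  rcases hN (u - (e ^ 2 / z) • aInf F ρ) with h | ⟨d, hd, h⟩
  · exact Or.inl (isCombOfAtMost_liftLevel_add_topBlock h (isCombOfAtMost_conicBlock_one he z))
  · refine Or.inr ⟨e ^ 2 / (e ^ 2 / z - d) - z, fun h0 => hd ?_, ?_⟩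
    · have := congrArg (e ^ 2 / ·) (sub_eq_zero.1 h0)
      simp only [hinv] at this
      linear_combination -this
    · rw [hshift, add_sub_cancel]
      refine isCombOfAtMost_liftLevel_add_topBlock ?_ (isCombOfAtMost_conicBlock_one he _)
      rw [hinv]
      convert h using 2
      module

theorem point_zero_mem_punctured (a : F) : point F 0 0 a ∈ punctured F 0 :=
  mem_punctured_iff.2 ⟨0, le_rfl, a, rfl⟩

theorem saturatesWithin_punctured_zero : SaturatesWithin (punctured F 0) (0 + 2) := by
  intro v _
  convert (smul_of_mem (point_zero_mem_punctured 1) (v 1)).add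
    (smul_of_mem (point_zero_mem_punctured 0) (v 0 - v 1)) using 1
  ext ⟨n, hn⟩
  interval_cases n <;> simp [point]

theorem alongAInf_zero : AlongAInf F 0 := by
  intro v
  by_cases hx : v 0 = 0
  · obtain ⟨y, rfl⟩ : ∃ y : F, v = y • aInf F 0 := ⟨v 1, by
      ext ⟨n, hn⟩
      interval_cases n <;> simp [aInf, unitV, hx]⟩
    rcases eq_or_ne y 0 with rfl | hy
    · exact Or.inl (by simpa using zero)
    · refine Or.inr ⟨-y, neg_ne_zero.2 hy, ?_⟩
      rw [← add_smul, add_neg_cancel, zero_smul]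
      exact zero
  · refine Or.inl ?_
    convert smul_of_mem (point_zero_mem_punctured (v 1 / v 0)) (v 0) using 1
    ext ⟨n, hn⟩
    interval_cases n
    · simp [point]
    · simp [point]; field_simp

theorem saturatesWithin_punctured_and_alongAInf [Fintype F] (hF : 4 ≤ Fintype.card F) :
    ∀ ρ, SaturatesWithin (punctured F ρ) (ρ + 2) ∧ AlongAInf F ρ
  | 0 => ⟨saturatesWithin_punctured_zero, alongAInf_zero⟩
  | ρ + 1 =>
    have ⟨hD, hN⟩ := saturatesWithin_punctured_and_alongAInf hF ρ
    ⟨saturatesWithin_punctured_succ hF hD hN, alongAInf_succ hF hD hN⟩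

def witness (F : Type) [Field F] (ρ : ℕ) : Fin (2 * ρ + 2) → F :=
  fun i => if (i : ℕ) = 2 * ρ + 1 ∨ (Even (i : ℕ) ∧ (i : ℕ) < 2 * ρ) then 1 else 0

theorem witness_ne_zero : witness F ρ ≠ 0 := fun h => by
  simpa [witness] using congrFun h ⟨2 * ρ + 1, by omega⟩

theorem not_isCombOfAtMost_witness :
    ¬ IsCombOfAtMost (punctured F ρ) (ρ + 1) (witness F ρ) := by
  classical
  rintro ⟨t, c, htS, htk, hwit⟩
  have hcoord (i : Fin (2 * ρ + 2)) : ∑ w ∈ t, c w * w i = witness F ρ i := by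
    rw [hwit]; simp [Finset.sum_apply]
  let T (u : Fin (ρ + 1)) := t.filter fun w => c w * w ⟨2 * u, by omega⟩ ≠ 0
  have hlow (u : Fin ρ) : 1 ≤ (T u.castSucc).card := by
    obtain ⟨w, hw, hne⟩ := Finset.exists_ne_zero_of_sum_ne_zero (s := t)
      (f := fun w => c w * w ⟨2 * u, by omega⟩) (by rw [hcoord]; simp [witness])
    exact Finset.card_pos.2 ⟨w, Finset.mem_filter.2 ⟨hw, hne⟩⟩
  have hlast : 2 ≤ (T (Fin.last ρ)).card := by
    obtain ⟨w, hw, hne⟩ := Finset.exists_ne_zero_of_sum_ne_zero (s := t)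
      (f := fun w => c w * w ⟨2 * ρ + 1, by omega⟩) (by rw [hcoord]; simp [witness])
    have hw2 : c w * w ⟨2 * ρ, by omega⟩ ≠ 0 := mul_ne_zero (left_ne_zero_of_mul hne)
      (apply_ne_zero_of_apply_last_ne_zero (htS hw) (right_ne_zero_of_mul hne))
    obtain ⟨w', hw', hww', hne'⟩ := exists_ne_apply_ne_zero_of_sum_eq_zero
      (f := fun w => c w * w ⟨2 * ρ, by omega⟩) (by rw [hcoord]; simp [witness]) hw hw2
    exact Finset.one_lt_card.2 ⟨w, Finset.mem_filter.2 ⟨hw, hw2⟩, w',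
      Finset.mem_filter.2 ⟨hw', hne'⟩, hww'.symm⟩
  have hsum : ∑ u, (T u).card ≤ ρ + 1 := (sum_card_filter_apply_even_le htS c).trans htk
  rw [Fin.sum_univ_castSucc] at hsum
  have := Finset.sum_le_sum fun u (_ : u ∈ Finset.univ) => hlow u
  simp only [Finset.sum_const, Finset.card_univ, Fintype.card_fin, smul_eq_mul, mul_one] at this
  omega

end ConstructionS

/-- for a prime power `q = 4` or `q ≥ 7` and any `ρ ≥ 0`, the set
`S_ρ ∖ {A_ρ^∞}` of size `(ρ+1)q`, obtained from Construction S by removing the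
point `A_ρ^∞ = (0,…,0,1)`, is a `(ρ+1)`-saturating set in `PG(2ρ+1, q)`. -/
theorem stmt11 (q ρ : ℕ) (F : Type) [Field F] [Fintype F] (hF : Fintype.card F = q)
    (hq : q = 4 ∨ 7 ≤ q) :
    IsSaturatingSet (constructionS F ρ \ {unitV F (2 * ρ + 2) (2 * ρ + 1)}) (ρ + 1)
    ∧ (constructionS F ρ \ {unitV F (2 * ρ + 2) (2 * ρ + 1)}).ncard = (ρ + 1) * q := by
  have hF4 : 4 ≤ Fintype.card F := by omega
  refine ⟨⟨(ConstructionS.saturatesWithin_punctured_and_alongAInf hF4 ρ).1, fun k hk hsat => ?_⟩,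
    hF ▸ ConstructionS.ncard_punctured⟩
  exact ConstructionS.not_isCombOfAtMost_witness
    ((hsat _ ConstructionS.witness_ne_zero).mono_s11 (by omega))
end

section
/- Let V̂_ρ be the linear code over F_q whose parity-check matrix has as columns the homogeneous-coordinate vectors of the points of the set S_ρ of Construction S, where ρ = R − 1. (i) If q = 4 or q ≥ 7, then for every R ≥ 1 the code V̂_ρ is an [Rq+1, Rq+1−2R]_q code with minimum distance 3 and covering radius R, and it is locally optimal. (ii) If q = 5, then the same holds for every R with 1 ≤ R ≤ 5. -/
/-- `v ∈ F^r` is a linear combination of at most `k` of the columns `h j`. -/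
def CoversWithin {F : Type} [Field F] {r n : ℕ} (h : Fin n → Fin r → F) (k : ℕ) : Prop :=
  ∀ v : Fin r → F, ∃ (s : Finset (Fin n)) (c : Fin n → F),
    s.card ≤ k ∧ v = ∑ j ∈ s, c j • h j

/-- The code with parity-check columns `h` has covering radius exactly `R`. -/
def HasCoveringRadius {F : Type} [Field F] {r n : ℕ} (h : Fin n → Fin r → F) (R : ℕ) : Prop :=
  CoversWithin h R ∧ ∀ k < R, ¬ CoversWithin h k

/-- The Hamming weight of a vector. -/
noncomputable def wt {F : Type} [Field F] {n : ℕ} (x : Fin n → F) : ℕ :=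
  {j | x j ≠ 0}.ncard

/-- The code with parity-check columns `h` has minimum distance `d`: every
nonzero codeword has weight at least `d`, and some codeword has weight `d`. -/
def HasMinDist {F : Type} [Field F] {r n : ℕ} (h : Fin n → Fin r → F) (d : ℕ) : Prop :=
  (∀ x : Fin n → F, ∑ j, x j • h j = 0 → x ≠ 0 → d ≤ wt x)
  ∧ ∃ x : Fin n → F, ∑ j, x j • h j = 0 ∧ wt x = d

/-- The covering code with parity-check columns `h` and covering radius `R` is
locally optimal: deleting any column destroys the covering within radius `R`
(i.e. yields a code of larger covering radius). -/
def LocallyOptimal {F : Type} [Field F] {r n : ℕ} (h : Fin n → Fin r → F) (R : ℕ) : Prop :=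
  ∀ j₀ : Fin n, ¬ ∀ v : Fin r → F, ∃ (s : Finset (Fin n)) (c : Fin n → F),
    j₀ ∉ s ∧ s.card ≤ R ∧ v = ∑ j ∈ s, c j • h j

/-!
Apart from `A_ρ^∞ = e_{2ρ+1}`, every point of `S_ρ` lives in one block of coordinates
`2u - 1, 2u, 2u + 1` (block `0`: coordinates `0, 1`) and has exactly one nonzero even
coordinate, `2u`; consecutive blocks share an odd coordinate.

Covering: write `v` block by block from the top down.  The part of `v` from coordinate `2u` on,
together with a "carry" `l` in the shared coordinate `2u - 1`, is produced by the points of the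
blocks above; one conic point (or `T_u`) handles a block with nonzero even coordinate, and when
`q ≥ 4` two or three conic points handle a block with zero even coordinate.  Tracking how many
points each carry costs keeps the total at `ρ + 1`.

Lower bound and local optimality: a vector with all even coordinates nonzero needs one point per
block, so a representation with `ρ + 1` points has exactly one point in each block.  If the odd
coordinates above block `u` vanish, the points above block `u` are forced to be the `T_w`, which
then pins down the point of block `u`; for `A_ρ^∞` a vector with `v_{2ρ} = 0 ≠ v_{2ρ+1}` needs
two points of block `ρ`.  Minimum distance: the points are pairwise non-proportional, and any
three points of the line block are dependent.
-/

section SpannedByAtMost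

variable {R V : Type*} [Semiring R] [AddCommMonoid V] [Module R V]

variable (R) in
def IsSpannedByAtMost (S : Set V) (k : ℕ) (v : V) : Prop :=
  ∃ t : Finset V, ↑t ⊆ S ∧ t.card ≤ k ∧ v ∈ Submodule.span R (t : Set V)

namespace IsSpannedByAtMost

variable {S : Set V} {k k' : ℕ} {v w : V}

theorem mono (H : IsSpannedByAtMost R S k v) (hk : k ≤ k') : IsSpannedByAtMost R S k' v :=
  let ⟨t, htS, htk, hv⟩ := H
  ⟨t, htS, htk.trans hk, hv⟩

theorem zero : IsSpannedByAtMost R S 0 (0 : V) :=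
  ⟨∅, by simp, by simp, zero_mem _⟩

theorem smul_of_mem {x : V} (hx : x ∈ S) (c : R) : IsSpannedByAtMost R S 1 (c • x) := by
  classical
  exact ⟨{x}, by simpa using hx, by simp,
    Submodule.smul_mem _ c (Submodule.subset_span (by simp))⟩

theorem add (Hv : IsSpannedByAtMost R S k v) (Hw : IsSpannedByAtMost R S k' w) :
    IsSpannedByAtMost R S (k + k') (v + w) := by
  classical
  obtain ⟨t, htS, htk, hv⟩ := Hv
  obtain ⟨t', htS', htk', hw⟩ := Hw
  refine ⟨t ∪ t', by simpa using ⟨htS, htS'⟩, (Finset.card_union_le t t').trans (by omega), ?_⟩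
  rw [Finset.coe_union]
  exact add_mem (Submodule.span_mono Set.subset_union_left hv)
    (Submodule.span_mono Set.subset_union_right hw)

theorem mem_span (H : IsSpannedByAtMost R S k v) : v ∈ Submodule.span R S := by
  obtain ⟨t, htS, -, hv⟩ := H
  exact Submodule.span_mono htS hv

end IsSpannedByAtMost

end SpannedByAtMost

section Separation

variable {F V ι : Type*} [Field F] [AddCommGroup V] [Module F V]

theorem exists_injOn_of_apply_sum_ne_zero (φ : ι → V →ₗ[F] F) {I : Finset ι} {t : Finset V}
    {c : V → F} (hsep : ∀ x ∈ t, ∀ i ∈ I, ∀ j ∈ I, φ i x ≠ 0 → φ j x ≠ 0 → i = j)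
    (hv : ∀ i ∈ I, φ i (∑ x ∈ t, c x • x) ≠ 0) :
    ∃ g : ι → V, Set.InjOn g I ∧ ∀ i ∈ I, g i ∈ t ∧ c (g i) * φ i (g i) ≠ 0 := by
  have hpick : ∀ i ∈ I, ∃ x ∈ t, c x * φ i x ≠ 0 := fun i hi =>
    Finset.exists_ne_zero_of_sum_ne_zero (by simpa using hv i hi)
  choose! g hgt hg using hpick
  refine ⟨g, fun i hi j hj hij => ?_, fun i hi => ⟨hgt i hi, hg i hi⟩⟩
  have hj' := hg j hj
  rw [← hij] at hj'
  exact hsep (g i) (hgt i hi) i hi j hj (right_ne_zero_of_mul (hg i hi))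
    (right_ne_zero_of_mul hj')

theorem card_le_of_apply_sum_ne_zero (φ : ι → V →ₗ[F] F) {I : Finset ι} {t : Finset V}
    {c : V → F} (hsep : ∀ x ∈ t, ∀ i ∈ I, ∀ j ∈ I, φ i x ≠ 0 → φ j x ≠ 0 → i = j)
    (hv : ∀ i ∈ I, φ i (∑ x ∈ t, c x • x) ≠ 0) : I.card ≤ t.card := by
  obtain ⟨g, hinj, hg⟩ := exists_injOn_of_apply_sum_ne_zero φ hsep hv
  exact Finset.card_le_card_of_injOn g (fun i hi => (hg i hi).1) hinj

theorem exists_sum_eq_sum_of_card_le (φ : ι → V →ₗ[F] F) {I : Finset ι} {t : Finset V}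
    {c : V → F} (hsep : ∀ x ∈ t, ∀ i ∈ I, ∀ j ∈ I, φ i x ≠ 0 → φ j x ≠ 0 → i = j)
    (hv : ∀ i ∈ I, φ i (∑ x ∈ t, c x • x) ≠ 0) (hcard : t.card ≤ I.card) :
    ∃ g : ι → V, (∀ i ∈ I, g i ∈ t ∧ c (g i) * φ i (g i) ≠ 0) ∧
      ∑ x ∈ t, c x • x = ∑ i ∈ I, c (g i) • g i := by
  classical
  obtain ⟨g, hinj, hg⟩ := exists_injOn_of_apply_sum_ne_zero φ hsep hv
  have himage : I.image g = t := Finset.eq_of_subset_of_card_le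
    (fun x hx => by obtain ⟨i, hi, rfl⟩ := Finset.mem_image.mp hx; exact (hg i hi).1)
    (by rwa [Finset.card_image_of_injOn hinj])
  exact ⟨g, hg, by rw [← himage, Finset.sum_image hinj]⟩

end Separation

section Coordinates

variable {R : Type*} [Semiring R] {N : ℕ}

def coord (m : ℕ) : (Fin N → R) →ₗ[R] R :=
  if h : m < N then LinearMap.proj ⟨m, h⟩ else 0

theorem coord_apply (m : ℕ) (v : Fin N → R) :
    coord m v = if h : m < N then v ⟨m, h⟩ else 0 := by
  unfold coord; split_ifs <;> rfl

/-- `x, y, z` in positions `2u - 1, 2u, 2u + 1`; for `u = 0` there is no position `-1` and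
`x` is dropped. -/
def blockVec (N u : ℕ) (x y z : R) : Fin N → R := fun i =>
  if (i : ℕ) + 1 = 2 * u then x else if (i : ℕ) = 2 * u then y
  else if (i : ℕ) = 2 * u + 1 then z else 0

theorem blockVec_add (u : ℕ) (x y z x' y' z' : R) :
    blockVec N u x y z + blockVec N u x' y' z' = blockVec N u (x + x') (y + y') (z + z') := by
  funext i; simp only [blockVec, Pi.add_apply]; split_ifs <;> simp

theorem smul_blockVec (u : ℕ) (c x y z : R) :
    c • blockVec N u x y z = blockVec N u (c * x) (c * y) (c * z) := by
  funext i; simp only [blockVec, Pi.smul_apply, smul_eq_mul]; split_ifs <;> simp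

theorem blockVec_zero_zero_zero (u : ℕ) : blockVec N u (0 : R) 0 0 = 0 := by
  funext i; simp [blockVec]

theorem blockVec_zero_left (x x' y z : R) : blockVec N 0 x y z = blockVec N 0 x' y z := by
  funext i; simp [blockVec]

theorem coord_blockVec {u : ℕ} (hu : 2 * u + 2 ≤ N) (m : ℕ) (x y z : R) :
    coord m (blockVec N u x y z) =
      if m + 1 = 2 * u then x else if m = 2 * u then y else if m = 2 * u + 1 then z else 0 := by
  rw [coord_apply]
  split_ifs <;> first | omega | simp_all [blockVec]

theorem coord_blockVec_self {u : ℕ} (hu : 2 * u + 2 ≤ N) (x y z : R) :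
    coord (2 * u) (blockVec N u x y z) = y := by
  rw [coord_blockVec hu, if_neg (by omega), if_pos rfl]

theorem coord_blockVec_succ {u : ℕ} (hu : 2 * u + 2 ≤ N) (x y z : R) :
    coord (2 * u + 1) (blockVec N u x y z) = z := by
  rw [coord_blockVec hu, if_neg (by omega), if_neg (by omega), if_pos rfl]

theorem coord_unitV {F : Type} [Field F] {k : ℕ} (hk : k < N) (m : ℕ) :
    coord m (unitV F N k) = if m = k then 1 else 0 := by
  rw [coord_apply]
  split_ifs <;> first | omega | simp_all [unitV]

theorem coord_blockVec_ne_zero {u m : ℕ} (hu : 2 * u + 2 ≤ N) {x y z : R}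
    (h : coord m (blockVec N u x y z) ≠ 0) : m + 1 = 2 * u ∨ m = 2 * u ∨ m = 2 * u + 1 := by
  rw [coord_blockVec hu] at h
  split_ifs at h <;> first | omega | exact absurd rfl h

theorem coord_unitV_ne_zero {F : Type} [Field F] {k m : ℕ} (hk : k < N)
    (h : coord m (unitV F N k) ≠ 0) : m = k := by
  rw [coord_unitV hk] at h
  split_ifs at h <;> first | assumption | exact absurd rfl h

end Coordinates

section Tail

variable {R : Type*} [Ring R] {N : ℕ}

def tailVec (v : Fin N → R) (u : ℕ) (l : R) : Fin N → R := fun i =>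
  if (i : ℕ) + 1 < 2 * u then 0 else if (i : ℕ) + 1 = 2 * u then l else v i

theorem tailVec_zero (v : Fin N → R) (l : R) : tailVec v 0 l = v := by
  funext i; simp [tailVec]

theorem tailVec_eq_add (v : Fin N → R) (u : ℕ) (l l' : R) :
    tailVec v u l' =
      tailVec v (u + 1) l + blockVec N u l' (coord (2 * u) v) (coord (2 * u + 1) v - l) := by
  funext ⟨m, hm⟩
  simp only [tailVec, blockVec, Pi.add_apply]
  split_ifs <;> first | omega | (subst_vars; simp [coord_apply, hm])

end Tail

section ConstructionS

variable {F : Type} [Field F] {ρ : ℕ}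

/-- The points of `S_ρ` other than `A_ρ^∞` are the vectors `blockVec (2ρ+2) u x y z` with
`u ≤ ρ` and `IsBlockPoint u x y z`: block `0` carries `A₀⁰ ∪ L₀* = {(1, a)}`, block `u ≥ 1`
carries `C_u* = {(1, a, a²) : a ≠ 0}` and `T_u = (0, 1, 0)`. -/
def IsBlockPoint (u : ℕ) (x y z : F) : Prop :=
  (u = 0 ∧ x = 0 ∧ y = 1) ∨ (1 ≤ u ∧ x = 1 ∧ y ≠ 0 ∧ z = y ^ 2) ∨ (1 ≤ u ∧ x = 0 ∧ y = 1 ∧ z = 0)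

theorem IsBlockPoint.snd_ne_zero {u : ℕ} {x y z : F} (h : IsBlockPoint u x y z) : y ≠ 0 := by
  rcases h with ⟨-, -, rfl⟩ | ⟨-, -, hy, -⟩ | ⟨-, -, rfl, -⟩ <;> simp_all

theorem mem_constructionS_iff {v : Fin (2 * ρ + 2) → F} :
    v ∈ constructionS F ρ ↔ v = unitV F (2 * ρ + 2) (2 * ρ + 1) ∨
      ∃ u ≤ ρ, ∃ x y z : F, IsBlockPoint u x y z ∧ v = blockVec (2 * ρ + 2) u x y z := by
  constructor
  · rintro ((((rfl | ⟨a, -, rfl⟩) | ⟨u, hu1, huρ, a, ha, rfl⟩) | ⟨u, hu1, huρ, rfl⟩) | rfl)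
    · refine Or.inr ⟨0, by omega, 0, 1, 0, Or.inl ⟨rfl, rfl, rfl⟩, ?_⟩
      funext i; simp only [unitV, blockVec]; split_ifs <;> first | rfl | omega | contradiction
    · refine Or.inr ⟨0, by omega, 0, 1, a, Or.inl ⟨rfl, rfl, rfl⟩, ?_⟩
      funext i; simp only [blockVec]; split_ifs <;> first | rfl | omega | contradiction
    · refine Or.inr ⟨u, huρ, 1, a, a ^ 2, Or.inr (Or.inl ⟨hu1, rfl, ha, rfl⟩), ?_⟩
      funext i; simp only [blockVec]; split_ifs <;> first | rfl | omega
    · refine Or.inr ⟨u, huρ, 0, 1, 0, Or.inr (Or.inr ⟨hu1, rfl, rfl, rfl⟩), ?_⟩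
      funext i; simp only [unitV, blockVec]; split_ifs <;> first | rfl | omega
    · exact Or.inl rfl
  · rintro (rfl | ⟨u, huρ, x, y, z, hpt, rfl⟩)
    · exact Or.inr rfl
    rcases hpt with ⟨rfl, rfl, rfl⟩ | ⟨hu1, rfl, hy, rfl⟩ | ⟨hu1, rfl, rfl, rfl⟩
    · by_cases hz : z = 0
      · subst hz
        refine Or.inl (Or.inl (Or.inl (Or.inl ?_)))
        funext i; simp only [unitV, blockVec]; split_ifs <;> first | rfl | omega | contradiction
      · refine Or.inl (Or.inl (Or.inl (Or.inr ⟨z, hz, ?_⟩)))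
        funext i; simp only [blockVec]; split_ifs <;> first | rfl | omega | contradiction
    · refine Or.inl (Or.inl (Or.inr ⟨u, hu1, huρ, y, hy, ?_⟩))
      funext i; simp only [blockVec]; split_ifs <;> first | rfl | omega
    · refine Or.inl (Or.inr ⟨u, hu1, huρ, ?_⟩)
      funext i; simp only [unitV, blockVec]; split_ifs <;> first | rfl | omega

theorem blockVec_mem {u : ℕ} (hu : u ≤ ρ) {x y z : F} (h : IsBlockPoint u x y z) :
    blockVec (2 * ρ + 2) u x y z ∈ constructionS F ρ :=
  mem_constructionS_iff.mpr (Or.inr ⟨u, hu, x, y, z, h, rfl⟩)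

theorem blockVec_line_mem (a : F) : blockVec (2 * ρ + 2) 0 0 1 a ∈ constructionS F ρ :=
  blockVec_mem (Nat.zero_le ρ) (Or.inl ⟨rfl, rfl, rfl⟩)

theorem blockVec_conic_mem {u : ℕ} (hu1 : 1 ≤ u) (hu : u ≤ ρ) {a : F} (ha : a ≠ 0) :
    blockVec (2 * ρ + 2) u 1 a (a ^ 2) ∈ constructionS F ρ :=
  blockVec_mem hu (Or.inr (Or.inl ⟨hu1, rfl, ha, rfl⟩))

theorem blockVec_tangent_mem {u : ℕ} (hu1 : 1 ≤ u) (hu : u ≤ ρ) :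
    blockVec (2 * ρ + 2) u 0 1 0 ∈ constructionS F ρ :=
  blockVec_mem hu (Or.inr (Or.inr ⟨hu1, rfl, rfl, rfl⟩))

theorem unitV_mem : unitV F (2 * ρ + 2) (2 * ρ + 1) ∈ constructionS F ρ :=
  mem_constructionS_iff.mpr (Or.inl rfl)

end ConstructionS

section FieldElements

variable {F : Type*} [Field F] [Fintype F]

theorem exists_ne_zero_ne_one (h3 : 3 ≤ Fintype.card F) : ∃ b : F, b ≠ 0 ∧ b ≠ 1 := by
  classical
  obtain ⟨b, -, hb⟩ := Finset.exists_mem_notMem_of_card_lt_card (s := ({0, 1} : Finset F))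
    (t := Finset.univ) (by rw [Finset.card_univ]; exact (Finset.card_le_two).trans_lt (by omega))
  simp only [Finset.mem_insert, Finset.mem_singleton, not_or] at hb
  exact ⟨b, hb⟩

theorem exists_three_ne_zero_ne_one (h4 : 4 ≤ Fintype.card F) :
    ∃ b g : F, b ≠ 0 ∧ b ≠ 1 ∧ g ≠ 0 ∧ g ≠ 1 ∧ b ≠ g := by
  classical
  obtain ⟨b, hb0, hb1⟩ := exists_ne_zero_ne_one (F := F) (by omega)
  obtain ⟨g, -, hg⟩ := Finset.exists_mem_notMem_of_card_lt_card (s := ({0, 1, b} : Finset F))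
    (t := Finset.univ) (by rw [Finset.card_univ]; exact (Finset.card_le_three).trans_lt (by omega))
  simp only [Finset.mem_insert, Finset.mem_singleton, not_or] at hg
  exact ⟨b, g, hb0, hb1, hg.1, hg.2.1, Ne.symm hg.2.2⟩

theorem exists_ne_zero_sq_ne_s12 (h4 : 4 ≤ Fintype.card F) (P : F) : ∃ a : F, a ≠ 0 ∧ a ^ 2 ≠ P := by
  obtain ⟨b, g, hb0, hb1, hg0, hg1, hbg⟩ := exists_three_ne_zero_ne_one h4
  by_contra! hsq
  have hsq1 := hsq 1 one_ne_zero
  have hb : b = -1 := by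
    have : (b - 1) * (b + 1) = 0 := by linear_combination hsq b hb0 - hsq1
    exact eq_neg_of_add_eq_zero_left ((mul_eq_zero.mp this).resolve_left (sub_ne_zero.mpr hb1))
  have hg : g = -1 := by
    have : (g - 1) * (g + 1) = 0 := by linear_combination hsq g hg0 - hsq1
    exact eq_neg_of_add_eq_zero_left ((mul_eq_zero.mp this).resolve_left (sub_ne_zero.mpr hg1))
  exact hbg (hb.trans hg.symm)

end FieldElements

section Covering

variable {F : Type} [Field F] {ρ : ℕ}

theorem blockVec_tangent_spanned {u : ℕ} (hu1 : 1 ≤ u) (hu : u ≤ ρ) (y : F) :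
    IsSpannedByAtMost F (constructionS F ρ) 1 (blockVec (2 * ρ + 2) u 0 y 0) := by
  simpa [smul_blockVec] using
    IsSpannedByAtMost.smul_of_mem (blockVec_tangent_mem (F := F) hu1 hu) y

theorem blockVec_conic_spanned {u : ℕ} (hu1 : 1 ≤ u) (hu : u ≤ ρ) {c y z : F} (hc : c ≠ 0)
    (hy : y ≠ 0) (hcz : c * z = y ^ 2) :
    IsSpannedByAtMost F (constructionS F ρ) 1 (blockVec (2 * ρ + 2) u c y z) := by
  convert IsSpannedByAtMost.smul_of_mem (blockVec_conic_mem hu1 hu (div_ne_zero hy hc)) c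
    using 1
  rw [smul_blockVec]
  congr 1 <;> field_simp
  linear_combination hcz

theorem blockVec_secant_spanned [Fintype F] (h4 : 4 ≤ Fintype.card F) {u : ℕ} (hu1 : 1 ≤ u)
    (hu : u ≤ ρ) {x z : F} (hx : x ≠ 0) (hz : z ≠ 0) :
    IsSpannedByAtMost F (constructionS F ρ) 2 (blockVec (2 * ρ + 2) u x 0 z) := by
  obtain ⟨a, ha, ha2⟩ := exists_ne_zero_sq_ne_s12 h4 (-z / x)
  set b := -z / x / a with hb
  have hb0 : b ≠ 0 := div_ne_zero (div_ne_zero (neg_ne_zero.mpr hz) hx) ha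
  have hab : b - a ≠ 0 := by
    refine sub_ne_zero.mpr fun h => ha2 ?_
    rw [hb, div_eq_iff ha] at h
    linear_combination -h
  have hmem : ∀ {a : F}, a ≠ 0 → blockVec (2 * ρ + 2) u 1 a (a ^ 2) ∈ constructionS F ρ :=
    blockVec_conic_mem hu1 hu
  convert (IsSpannedByAtMost.smul_of_mem (hmem ha) (x * b / (b - a))).add
    (IsSpannedByAtMost.smul_of_mem (hmem hb0) (-(x * a) / (b - a))) using 1
  have hxba : x * b * a = -z := by rw [hb]; field_simp
  rw [smul_blockVec, smul_blockVec, blockVec_add]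
  congr 1 <;> field_simp
  · ring
  · ring
  · linear_combination (b - a) * hxba

theorem blockVec_three_spanned [Fintype F] (h4 : 4 ≤ Fintype.card F) {u : ℕ} (hu1 : 1 ≤ u)
    (hu : u ≤ ρ) (z : F) :
    IsSpannedByAtMost F (constructionS F ρ) 3 (blockVec (2 * ρ + 2) u 0 0 z) := by
  obtain ⟨b, g, hb0, hb1, hg0, hg1, hbg⟩ := exists_three_ne_zero_ne_one h4
  have hmem : ∀ {a : F}, a ≠ 0 → blockVec (2 * ρ + 2) u 1 a (a ^ 2) ∈ constructionS F ρ :=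
    blockVec_conic_mem hu1 hu
  have h1b : (1 : F) - b ≠ 0 := sub_ne_zero.mpr (Ne.symm hb1)
  have h1g : (1 : F) - g ≠ 0 := sub_ne_zero.mpr (Ne.symm hg1)
  have hbg' : b - g ≠ 0 := sub_ne_zero.mpr hbg
  -- Lagrange interpolation at the nodes `1, b, g`
  convert ((IsSpannedByAtMost.smul_of_mem (hmem one_ne_zero) (z / ((1 - b) * (1 - g)))).add
    (IsSpannedByAtMost.smul_of_mem (hmem hb0) (-(z / ((1 - b) * (b - g)))))).add
    (IsSpannedByAtMost.smul_of_mem (hmem hg0) (z / ((1 - g) * (b - g)))) using 1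
  rw [smul_blockVec, smul_blockVec, smul_blockVec, blockVec_add, blockVec_add]
  congr 1 <;> field_simp <;> ring

theorem blockVec_zero_spanned_of_ne_zero {x y : F} (hy : y ≠ 0) (z : F) :
    IsSpannedByAtMost F (constructionS F ρ) 1 (blockVec (2 * ρ + 2) 0 x y z) := by
  convert IsSpannedByAtMost.smul_of_mem (blockVec_line_mem (ρ := ρ) (z / y)) y using 1
  rw [smul_blockVec, blockVec_zero_left x (y * 0)]
  congr 1 <;> field_simp

theorem blockVec_zero_spanned (x y z : F) :
    IsSpannedByAtMost F (constructionS F ρ) 2 (blockVec (2 * ρ + 2) 0 x y z) := by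
  by_cases hy : y = 0
  · convert (IsSpannedByAtMost.smul_of_mem (blockVec_line_mem (ρ := ρ) (1 : F)) z).add
      (IsSpannedByAtMost.smul_of_mem (blockVec_line_mem (ρ := ρ) (0 : F)) (-z)) using 1
    rw [hy, smul_blockVec, smul_blockVec, blockVec_add, blockVec_zero_left x 0]
    congr 1 <;> ring
  · exact (blockVec_zero_spanned_of_ne_zero hy z).mono (by omega)

end Covering

section Descent

variable {F : Type} [Field F] {ρ : ℕ} (v : Fin (2 * ρ + 2) → F)

theorem tailVec_top (l : F) : tailVec v (ρ + 1) l = l • unitV F (2 * ρ + 2) (2 * ρ + 1) := by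
  funext i
  simp only [tailVec, unitV, Pi.smul_apply, smul_eq_mul]
  split_ifs <;> first | omega | simp

variable {v}

theorem tailVec_spanned_of_succ {u k j : ℕ} {l l' : F}
    (H : IsSpannedByAtMost F (constructionS F ρ) k (tailVec v (u + 1) l))
    (hb : IsSpannedByAtMost F (constructionS F ρ) j
      (blockVec (2 * ρ + 2) u l' (coord (2 * u) v) (coord (2 * u + 1) v - l))) :
    IsSpannedByAtMost F (constructionS F ρ) (k + j) (tailVec v u l') := by
  rw [tailVec_eq_add v u l l']
  exact H.add hb

theorem exists_tailVec_spanned_of_ne_zero {u k : ℕ} (hu1 : 1 ≤ u) (hu : u ≤ ρ)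
    (hy : coord (2 * u) v ≠ 0) {l : F}
    (H : IsSpannedByAtMost F (constructionS F ρ) k (tailVec v (u + 1) l)) :
    ∃ l', IsSpannedByAtMost F (constructionS F ρ) (k + 1) (tailVec v u l') := by
  by_cases hl : coord (2 * u + 1) v - l = 0
  · exact ⟨0, tailVec_spanned_of_succ H (by
      simpa [hl] using blockVec_tangent_spanned hu1 hu (coord (2 * u) v))⟩
  · exact ⟨coord (2 * u) v ^ 2 / (coord (2 * u + 1) v - l), tailVec_spanned_of_succ H
      (blockVec_conic_spanned hu1 hu (div_ne_zero (pow_ne_zero 2 hy) hl) hy (by field_simp))⟩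

theorem tailVec_spanned_of_ne_zero {u k : ℕ} (hu1 : 1 ≤ u) (hu : u ≤ ρ)
    (hy : coord (2 * u) v ≠ 0)
    (H : ∀ l, IsSpannedByAtMost F (constructionS F ρ) k (tailVec v (u + 1) l)) (l' : F) :
    IsSpannedByAtMost F (constructionS F ρ) (k + 1) (tailVec v u l') := by
  by_cases hl' : l' = 0
  · subst hl'
    exact tailVec_spanned_of_succ (H (coord (2 * u + 1) v)) (by
      simpa using blockVec_tangent_spanned hu1 hu (coord (2 * u) v))
  · refine tailVec_spanned_of_succ (H (coord (2 * u + 1) v - coord (2 * u) v ^ 2 / l'))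
      (blockVec_conic_spanned hu1 hu hl' hy ?_)
    field_simp
    ring

theorem tailVec_spanned_of_eq_zero {u k : ℕ} (hy : coord (2 * u) v = 0)
    (H : IsSpannedByAtMost F (constructionS F ρ) k (tailVec v (u + 1) (coord (2 * u + 1) v))) :
    IsSpannedByAtMost F (constructionS F ρ) k (tailVec v u 0) := by
  have hb : blockVec (2 * ρ + 2) u 0 (coord (2 * u) v) (coord (2 * u + 1) v - coord (2 * u + 1) v)
      = 0 := by rw [hy, sub_self, blockVec_zero_zero_zero]
  exact tailVec_spanned_of_succ (j := 0) H (hb ▸ IsSpannedByAtMost.zero)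

theorem tailVec_spanned_secant [Fintype F] (h4 : 4 ≤ Fintype.card F) {u k : ℕ} (hu1 : 1 ≤ u)
    (hu : u ≤ ρ) (hy : coord (2 * u) v = 0) {l : F} (hl : l ≠ coord (2 * u + 1) v)
    (H : IsSpannedByAtMost F (constructionS F ρ) k (tailVec v (u + 1) l)) {l' : F}
    (hl' : l' ≠ 0) : IsSpannedByAtMost F (constructionS F ρ) (k + 2) (tailVec v u l') :=
  tailVec_spanned_of_succ H (by
    simpa [hy] using blockVec_secant_spanned h4 hu1 hu hl' (sub_ne_zero.mpr hl.symm))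

theorem tailVec_spanned_three [Fintype F] (h4 : 4 ≤ Fintype.card F) {u k : ℕ} (hu1 : 1 ≤ u)
    (hu : u ≤ ρ) (hy : coord (2 * u) v = 0) {l : F}
    (H : IsSpannedByAtMost F (constructionS F ρ) k (tailVec v (u + 1) l)) :
    IsSpannedByAtMost F (constructionS F ρ) (k + 3) (tailVec v u 0) :=
  tailVec_spanned_of_succ H (by simpa [hy] using blockVec_three_spanned h4 hu1 hu _)

end Descent

section Budget

variable {F : Type} [Field F] {ρ : ℕ}

/-- The carry `l` is the coordinate `2u - 1` of `tailVec v u l`, the position that block `u`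
shares with block `u - 1`. -/
def TailBudget (v : Fin (2 * ρ + 2) → F) (u m : ℕ) : Prop :=
  ((∀ l, IsSpannedByAtMost F (constructionS F ρ) (m + 1) (tailVec v u l)) ∧
      ∃ l, IsSpannedByAtMost F (constructionS F ρ) m (tailVec v u l)) ∨
    ∃ l, ∃ k < m, IsSpannedByAtMost F (constructionS F ρ) k (tailVec v u l)

theorem tailBudget_top (v : Fin (2 * ρ + 2) → F) : TailBudget v (ρ + 1) 0 := by
  refine Or.inl ⟨fun l => ?_, 0, ?_⟩ <;> rw [tailVec_top]
  · exact IsSpannedByAtMost.smul_of_mem unitV_mem l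
  · simpa using IsSpannedByAtMost.zero

theorem TailBudget.of_succ [Fintype F] (h4 : 4 ≤ Fintype.card F) {v : Fin (2 * ρ + 2) → F}
    {u m : ℕ} (hu1 : 1 ≤ u) (hu : u ≤ ρ) (H : TailBudget v (u + 1) m) :
    TailBudget v u (m + 1) := by
  by_cases hy : coord (2 * u) v = 0
  · rcases H with ⟨hall, l, hl⟩ | ⟨l, k, hk, hl⟩ <;>
      by_cases hlz : l = coord (2 * u + 1) v
    · exact Or.inr ⟨0, m, by omega, tailVec_spanned_of_eq_zero hy (hlz ▸ hl)⟩
    · refine Or.inl ⟨fun l' => ?_, 0, tailVec_spanned_of_eq_zero hy (hall _)⟩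
      by_cases hl' : l' = 0
      · exact hl' ▸ (tailVec_spanned_of_eq_zero hy (hall _)).mono (by omega)
      · exact tailVec_spanned_secant h4 hu1 hu hy hlz hl hl'
    · exact Or.inr ⟨0, k, by omega, tailVec_spanned_of_eq_zero hy (hlz ▸ hl)⟩
    · refine Or.inl ⟨fun l' => ?_, 1,
        (tailVec_spanned_secant h4 hu1 hu hy hlz hl one_ne_zero).mono (by omega)⟩
      by_cases hl' : l' = 0
      · exact hl' ▸ (tailVec_spanned_three h4 hu1 hu hy hl).mono (by omega)
      · exact (tailVec_spanned_secant h4 hu1 hu hy hlz hl hl').mono (by omega)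
  · rcases H with ⟨hall, l, hl⟩ | ⟨l, k, hk, hl⟩
    · exact Or.inl ⟨tailVec_spanned_of_ne_zero hu1 hu hy hall,
        exists_tailVec_spanned_of_ne_zero hu1 hu hy hl⟩
    · obtain ⟨l', hl'⟩ := exists_tailVec_spanned_of_ne_zero hu1 hu hy hl
      exact Or.inr ⟨l', k + 1, by omega, hl'⟩

theorem tailBudget_one [Fintype F] (h4 : 4 ≤ Fintype.card F) (v : Fin (2 * ρ + 2) → F) :
    TailBudget v 1 ρ := by
  have key : ∀ m ≤ ρ, TailBudget v (ρ + 1 - m) m := by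
    intro m
    induction m with
    | zero => simpa using tailBudget_top v
    | succ m ih =>
      intro hm
      have H : TailBudget v (ρ - m + 1) m := by
        rw [show ρ - m + 1 = ρ + 1 - m by omega]; exact ih (by omega)
      rw [show ρ + 1 - (m + 1) = ρ - m by omega]
      exact H.of_succ h4 (by omega) (by omega)
  simpa using key ρ le_rfl

theorem constructionS_spanned [Fintype F] (h4 : 4 ≤ Fintype.card F) (v : Fin (2 * ρ + 2) → F) :
    IsSpannedByAtMost F (constructionS F ρ) (ρ + 1) v := by
  have hv : ∀ {k j : ℕ} {l : F},
      IsSpannedByAtMost F (constructionS F ρ) k (tailVec v 1 l) →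
      IsSpannedByAtMost F (constructionS F ρ) j
        (blockVec (2 * ρ + 2) 0 0 (coord 0 v) (coord 1 v - l)) →
      IsSpannedByAtMost F (constructionS F ρ) (k + j) v := fun H hb => by
    simpa [tailVec_zero] using tailVec_spanned_of_succ (u := 0) (l' := 0) H hb
  rcases tailBudget_one h4 v with ⟨hall, l, hl⟩ | ⟨l, k, hk, hl⟩
  · by_cases hy : coord 0 v = 0
    · have hb : blockVec (2 * ρ + 2) 0 0 (coord 0 v) (coord 1 v - coord 1 v) = 0 := by
        rw [hy, sub_self, blockVec_zero_zero_zero]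
      exact hv (j := 0) (hall (coord 1 v)) (hb ▸ IsSpannedByAtMost.zero)
    · exact hv hl (blockVec_zero_spanned_of_ne_zero hy _)
  · exact (hv hl (blockVec_zero_spanned _ _ _)).mono (by omega)

end Budget

section Points

variable {F : Type} [Field F] {ρ : ℕ}

theorem IsBlockPoint.eq_of_smul {u : ℕ} {x y z x' y' z' d : F} (h : IsBlockPoint u x y z)
    (h' : IsBlockPoint u x' y' z') (hy : d * y = y') (hz : d * z = z') :
    x = x' ∧ y = y' ∧ z = z' := by
  rcases h with ⟨hu, rfl, rfl⟩ | ⟨hu, rfl, hy0, rfl⟩ | ⟨hu, rfl, rfl, rfl⟩ <;>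
    rcases h' with ⟨hu', rfl, rfl⟩ | ⟨hu', rfl, hy0', rfl⟩ | ⟨hu', rfl, rfl, rfl⟩ <;>
    first | omega | skip
  · rw [mul_one] at hy; subst hy; simp_all
  · subst hy
    have hd : d = 1 := by
      have hdy : d * y * (d * y - y) = 0 := by linear_combination -hz
      have := (mul_eq_zero.mp hdy).resolve_left hy0'
      exact (mul_left_eq_self₀.mp (sub_eq_zero.mp this)).resolve_right hy0
    simp [hd]
  · have hd : d = 0 := (mul_eq_zero.mp hz).resolve_right (pow_ne_zero 2 hy0)
    simp [hd] at hy
  · exact absurd (pow_eq_zero_iff two_ne_zero |>.mp (by rw [← hz]; ring)) hy0'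
  · exact ⟨rfl, rfl, rfl⟩

theorem IsBlockPoint.fst_eq_zero {u : ℕ} {x y : F} (h : IsBlockPoint u x y 0) (hu : 1 ≤ u) :
    x = 0 := by
  rcases h with ⟨rfl, -, -⟩ | ⟨-, -, hy, hz⟩ | ⟨-, rfl, -, -⟩
  · omega
  · exact absurd (pow_eq_zero_iff two_ne_zero |>.mp hz.symm) hy
  · rfl

theorem isBlockPoint_of_coord_ne_zero {x : Fin (2 * ρ + 2) → F} (hx : x ∈ constructionS F ρ)
    {u : ℕ} (h : coord (2 * u) x ≠ 0) :
    u ≤ ρ ∧ ∃ a b c, IsBlockPoint u a b c ∧ x = blockVec (2 * ρ + 2) u a b c := by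
  rcases mem_constructionS_iff.mp hx with rfl | ⟨u', hu', a, b, c, hpt, rfl⟩
  · have := coord_unitV_ne_zero (by omega) h
    omega
  · have := coord_blockVec_ne_zero (by omega) h
    obtain rfl : u = u' := by omega
    exact ⟨hu', a, b, c, hpt, rfl⟩

theorem eq_of_coord_ne_zero {x : Fin (2 * ρ + 2) → F} (hx : x ∈ constructionS F ρ) {i j : ℕ}
    (hi : coord (2 * i) x ≠ 0) (hj : coord (2 * j) x ≠ 0) : i = j := by
  obtain ⟨hiρ, a, b, c, -, rfl⟩ := isBlockPoint_of_coord_ne_zero hx hi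
  have := coord_blockVec_ne_zero (by omega) hj
  omega

theorem coord_ne_zero_of_coord_top_ne_zero {x : Fin (2 * ρ + 2) → F}
    (hx : x ∈ constructionS F ρ) (hne : x ≠ unitV F (2 * ρ + 2) (2 * ρ + 1))
    (h : coord (2 * ρ + 1) x ≠ 0) : coord (2 * ρ) x ≠ 0 := by
  rcases mem_constructionS_iff.mp hx with rfl | ⟨u, hu, a, b, c, hpt, rfl⟩
  · exact absurd rfl hne
  · have := coord_blockVec_ne_zero (by omega) h
    obtain rfl : u = ρ := by omega
    rw [coord_blockVec (by omega), if_neg (by omega), if_pos rfl]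
    exact hpt.snd_ne_zero

end Points

section BlockSum

variable {F : Type} [Field F] {ρ : ℕ}

theorem exists_blockVec_sum_of_card_le {v : Fin (2 * ρ + 2) → F}
    {t : Finset (Fin (2 * ρ + 2) → F)} (ht : ↑t ⊆ constructionS F ρ) (hcard : t.card ≤ ρ + 1)
    (hv : v ∈ Submodule.span F (t : Set (Fin (2 * ρ + 2) → F)))
    (hev : ∀ u ≤ ρ, coord (2 * u) v ≠ 0) :
    ∃ d a b c : ℕ → F, (∀ u ≤ ρ, blockVec (2 * ρ + 2) u (a u) (b u) (c u) ∈ t ∧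
        IsBlockPoint u (a u) (b u) (c u) ∧ d u ≠ 0) ∧
      v = ∑ u ∈ Finset.range (ρ + 1), d u • blockVec (2 * ρ + 2) u (a u) (b u) (c u) := by
  obtain ⟨f, -, rfl⟩ := Submodule.mem_span_finset.mp hv
  obtain ⟨g, hg, hsum⟩ := exists_sum_eq_sum_of_card_le (fun u => coord (2 * u))
    (I := Finset.range (ρ + 1)) (fun x hx i _ j _ hi hj => eq_of_coord_ne_zero (ht hx) hi hj)
    (fun u hu => hev u (Nat.lt_succ_iff.mp (Finset.mem_range.mp hu))) (by simpa using hcard)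
  have hblock : ∀ u ∈ Finset.range (ρ + 1),
      ∃ a b c, IsBlockPoint u a b c ∧ g u = blockVec (2 * ρ + 2) u a b c := fun u hu =>
    (isBlockPoint_of_coord_ne_zero (ht (hg u hu).1) (right_ne_zero_of_mul (hg u hu).2)).2
  choose! a b c hpt heq using hblock
  refine ⟨fun u => f (g u), a, b, c, fun u hu => ?_, ?_⟩
  · have hu' : u ∈ Finset.range (ρ + 1) := Finset.mem_range.mpr (by omega)
    exact ⟨heq u hu' ▸ (hg u hu').1, hpt u hu', left_ne_zero_of_mul (hg u hu').2⟩
  · rw [hsum]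
    exact Finset.sum_congr rfl fun u hu => by simp only [heq u hu]

variable {d a b c : ℕ → F} {w : ℕ}

theorem coord_even_blockVec_sum (hw : w ≤ ρ) :
    coord (2 * w) (∑ u ∈ Finset.range (ρ + 1), d u • blockVec (2 * ρ + 2) u (a u) (b u) (c u)) =
      d w * b w := by
  rw [map_sum, Finset.sum_eq_single w]
  · rw [map_smul, coord_blockVec (by omega), if_neg (by omega), if_pos rfl, smul_eq_mul]
  · intro u hu huw
    rw [map_smul, coord_blockVec (by simp at hu; omega), if_neg (by omega), if_neg (by omega),
      if_neg (by omega), smul_zero]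
  · intro hw'; simp at hw'; omega

theorem coord_odd_blockVec_sum (hw : w ≤ ρ) :
    coord (2 * w + 1)
        (∑ u ∈ Finset.range (ρ + 1), d u • blockVec (2 * ρ + 2) u (a u) (b u) (c u)) =
      d w * c w + if w < ρ then d (w + 1) * a (w + 1) else 0 := by
  have hterm : ∀ u ∈ Finset.range (ρ + 1),
      coord (2 * w + 1) (d u • blockVec (2 * ρ + 2) u (a u) (b u) (c u)) =
        (if w = u then d u * c u else 0) + if w + 1 = u then d u * a u else 0 := by
    intro u hu
    rw [map_smul, coord_blockVec (by simp at hu; omega), smul_eq_mul]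
    split_ifs <;> first | omega | simp
  rw [map_sum, Finset.sum_congr rfl hterm, Finset.sum_add_distrib, Finset.sum_ite_eq,
    Finset.sum_ite_eq]
  simp only [Finset.mem_range]
  split_ifs <;> first | omega | simp

end BlockSum

section LocalOptimality

variable {F : Type} [Field F] {ρ : ℕ}

def evensExcept (N w : ℕ) : Fin N → F := fun i =>
  if (i : ℕ) % 2 = 0 ∧ (i : ℕ) ≠ 2 * w then 1 else 0

theorem coord_even_evensExcept {N u : ℕ} (hu : 2 * u < N) (w : ℕ) :
    coord (2 * u) (evensExcept N w : Fin N → F) = if u = w then 0 else 1 := by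
  rw [coord_apply, dif_pos hu]
  simp only [evensExcept]
  split_ifs <;> first | rfl | omega

theorem coord_odd_evensExcept {N : ℕ} (u w : ℕ) :
    coord (2 * u + 1) (evensExcept N w : Fin N → F) = 0 := by
  rw [coord_apply]
  split_ifs
  · simp only [evensExcept]
    rw [if_neg (by omega)]
  · rfl

theorem blockVec_sum_tangent {d a b c : ℕ → F} {u₀ : ℕ}
    (hpt : ∀ u ≤ ρ, IsBlockPoint u (a u) (b u) (c u) ∧ d u ≠ 0)
    (hodd : ∀ w, u₀ < w → w ≤ ρ → coord (2 * w + 1)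
      (∑ u ∈ Finset.range (ρ + 1), d u • blockVec (2 * ρ + 2) u (a u) (b u) (c u)) = 0) :
    ∀ w, u₀ < w → w ≤ ρ → a w = 0 ∧ c w = 0 := by
  have step : ∀ w, u₀ < w → w ≤ ρ → (w < ρ → a (w + 1) = 0) → a w = 0 ∧ c w = 0 := by
    intro w hw hwρ hnext
    have h := hodd w hw hwρ
    rw [coord_odd_blockVec_sum hwρ] at h
    have hc : c w = 0 := by
      split_ifs at h with hlt
      · rw [hnext hlt, mul_zero, add_zero] at h
        exact (mul_eq_zero.mp h).resolve_left (hpt w hwρ).2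
      · rw [add_zero] at h
        exact (mul_eq_zero.mp h).resolve_left (hpt w hwρ).2
    have hpt' : IsBlockPoint w (a w) (b w) 0 := hc ▸ (hpt w hwρ).1
    exact ⟨hpt'.fst_eq_zero (by omega), hc⟩
  intro w hw hwρ
  exact Nat.decreasingInduction (motive := fun w _ => u₀ < w → a w = 0 ∧ c w = 0)
    (fun k hk ih hk₀ => step k hk₀ hk.le fun _ => (ih (by omega)).1)
    (fun hρ => step ρ hρ le_rfl fun h => absurd h (lt_irrefl ρ)) hwρ hw

theorem not_spanned_blockVec_add_evensExcept {u : ℕ} (hu : u ≤ ρ) {x y z : F}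
    (hpt : IsBlockPoint u x y z) :
    ¬ IsSpannedByAtMost F (constructionS F ρ \ {blockVec (2 * ρ + 2) u x y z}) (ρ + 1)
      (blockVec (2 * ρ + 2) u x y z + evensExcept (2 * ρ + 2) u) := by
  rintro ⟨t, ht, hcard, hv⟩
  have hev : ∀ w ≤ ρ, coord (2 * w)
      (blockVec (2 * ρ + 2) u x y z + evensExcept (2 * ρ + 2) u) ≠ (0 : F) := by
    intro w hw
    rw [map_add, coord_blockVec (by omega), coord_even_evensExcept (by omega)]
    split_ifs <;> first | omega | simp [hpt.snd_ne_zero]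
  obtain ⟨d, a, b, c, hrep, hsum⟩ :=
    exists_blockVec_sum_of_card_le (ht.trans Set.sdiff_subset) hcard hv hev
  have hodd : ∀ w, u ≤ w → coord (2 * w + 1)
      (blockVec (2 * ρ + 2) u x y z + evensExcept (2 * ρ + 2) u) =
        if w = u then z else 0 := by
    intro w hw
    rw [map_add, coord_blockVec (by omega), coord_odd_evensExcept, add_zero]
    split_ifs <;> first | omega | rfl
  -- the points above block `u` are the `T_w`, so coordinates `2u, 2u + 1` come from block `u`
  have htangent := blockVec_sum_tangent (u₀ := u) (fun w hw => (hrep w hw).2)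
    fun w hw _ => by rw [← hsum, hodd w hw.le, if_neg (by omega)]
  have hy : d u * b u = y := by
    rw [← coord_even_blockVec_sum hu, ← hsum, map_add, coord_blockVec (by omega),
      coord_even_evensExcept (by omega), if_neg (by omega), if_pos rfl, if_pos rfl, add_zero]
  have hz : d u * c u = z := by
    have h := coord_odd_blockVec_sum (d := d) (a := a) (b := b) (c := c) hu
    rw [← hsum, hodd u le_rfl, if_pos rfl] at h
    split_ifs at h with hlt
    · rw [(htangent (u + 1) (by omega) hlt).1, mul_zero, add_zero] at h; exact h.symm
    · rw [add_zero] at h; exact h.symm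
  obtain ⟨rfl, rfl, rfl⟩ := (hrep u hu).2.1.eq_of_smul hpt hy hz
  exact (ht (hrep u hu).1).2 rfl

theorem exists_two_coord_ne_zero {t : Finset (Fin (2 * ρ + 2) → F)}
    (ht : ↑t ⊆ constructionS F ρ \ {unitV F (2 * ρ + 2) (2 * ρ + 1)}) {f : _ → F}
    (htop : coord (2 * ρ + 1) (∑ x ∈ t, f x • x) ≠ 0)
    (hbot : coord (2 * ρ) (∑ x ∈ t, f x • x) = 0) :
    ∃ x₁ ∈ t, ∃ x₂ ∈ t, x₂ ≠ x₁ ∧ coord (2 * ρ) x₁ ≠ 0 ∧ coord (2 * ρ) x₂ ≠ 0 := by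
  classical
  rw [map_sum] at htop
  obtain ⟨x₁, hx₁, h₁⟩ := Finset.exists_ne_zero_of_sum_ne_zero htop
  rw [map_smul, smul_eq_mul] at h₁
  have h₁' : coord (2 * ρ) x₁ ≠ 0 := coord_ne_zero_of_coord_top_ne_zero (ht hx₁).1
    (ht hx₁).2 (right_ne_zero_of_mul h₁)
  rw [map_sum, ← Finset.add_sum_erase _ _ hx₁, map_smul, smul_eq_mul] at hbot
  obtain ⟨x₂, hx₂, h₂⟩ := Finset.exists_ne_zero_of_sum_ne_zero fun h => by
    rw [h, add_zero] at hbot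
    exact mul_ne_zero (left_ne_zero_of_mul h₁) h₁' hbot
  rw [map_smul, smul_eq_mul] at h₂
  exact ⟨x₁, hx₁, x₂, Finset.mem_of_mem_erase hx₂, Finset.ne_of_mem_erase hx₂, h₁',
    right_ne_zero_of_mul h₂⟩

theorem not_spanned_evensExcept_add_unitV :
    ¬ IsSpannedByAtMost F (constructionS F ρ \ {unitV F (2 * ρ + 2) (2 * ρ + 1)}) (ρ + 1)
      (evensExcept (2 * ρ + 2) ρ + unitV F (2 * ρ + 2) (2 * ρ + 1)) := by
  classical
  rintro ⟨t, ht, hcard, hv⟩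
  obtain ⟨f, -, hsum⟩ := Submodule.mem_span_finset.mp hv
  obtain ⟨x₁, hx₁, x₂, hx₂, h₂₁, h₁, h₂⟩ := exists_two_coord_ne_zero ht (f := f)
    (by rw [hsum, map_add, coord_odd_evensExcept, coord_unitV (by omega), if_pos rfl]; simp)
    (by rw [hsum, map_add, coord_even_evensExcept (by omega), if_pos rfl, coord_unitV (by omega),
      if_neg (by omega), add_zero])
  obtain ⟨g, hinj, hg⟩ := exists_injOn_of_apply_sum_ne_zero (fun u => coord (2 * u))
    (I := Finset.range ρ) (c := f) (fun x hx i _ j _ hi hj => eq_of_coord_ne_zero (ht hx).1 hi hj)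
    fun u hu => by
      rw [Finset.mem_range] at hu
      rw [hsum, map_add, coord_even_evensExcept (by omega), coord_unitV (by omega),
        if_neg (by omega), if_neg (by omega)]
      simp
  -- the points `x₁, x₂` of block `ρ` are not among those hitting the even coordinates `< 2ρ`
  have hmaps : Set.MapsTo g (Finset.range ρ) ((t.erase x₁).erase x₂) := by
    intro u hu
    have hu' : u < ρ := Finset.mem_range.mp hu
    have hgu := right_ne_zero_of_mul (hg u hu).2
    simp only [Finset.coe_erase, Set.mem_sdiff, Set.mem_singleton_iff, Finset.mem_coe]
    refine ⟨⟨(hg u hu).1, fun h => ?_⟩, fun h => ?_⟩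
    · have := eq_of_coord_ne_zero (ht hx₁).1 (h ▸ hgu) h₁; omega
    · have := eq_of_coord_ne_zero (ht hx₂).1 (h ▸ hgu) h₂; omega
  have hx₂' : x₂ ∈ t.erase x₁ := Finset.mem_erase.mpr ⟨h₂₁, hx₂⟩
  have hle := Finset.card_le_card_of_injOn g hmaps hinj
  have hpos : 0 < (t.erase x₁).card := Finset.card_pos.mpr ⟨x₂, hx₂'⟩
  rw [Finset.card_range, Finset.card_erase_of_mem hx₂'] at hle
  rw [Finset.card_erase_of_mem hx₁] at hle hpos
  omega

theorem not_spanned_evensExcept :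
    ¬ IsSpannedByAtMost F (constructionS F ρ) ρ (evensExcept (2 * ρ + 2) (ρ + 1)) := by
  rintro ⟨t, ht, hcard, hv⟩
  obtain ⟨f, -, hsum⟩ := Submodule.mem_span_finset.mp hv
  have := card_le_of_apply_sum_ne_zero (fun u => coord (2 * u)) (I := Finset.range (ρ + 1))
    (fun x hx i _ j _ hi hj => eq_of_coord_ne_zero (ht hx) hi hj) fun u hu => by
      rw [Finset.mem_range] at hu
      rw [hsum, coord_even_evensExcept (by omega), if_neg (by omega)]
      exact one_ne_zero
  rw [Finset.card_range] at this
  omega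

end LocalOptimality

section Columns

variable {F : Type} [Field F] {n r : ℕ} {h : Fin n → Fin r → F}

theorem sum_smul_mem_span_image [DecidableEq (Fin r → F)] (s : Finset (Fin n)) (c : Fin n → F) :
    ∑ j ∈ s, c j • h j ∈ Submodule.span F (s.image h : Set (Fin r → F)) :=
  Submodule.sum_mem _ fun j hj =>
    Submodule.smul_mem _ _ (Submodule.subset_span (by simpa using ⟨j, hj, rfl⟩))

theorem isSpannedByAtMost_of_coversWithin {k : ℕ} (H : CoversWithin h k) (v : Fin r → F) :
    IsSpannedByAtMost F (Set.range h) k v := by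
  classical
  obtain ⟨s, c, hk, rfl⟩ := H v
  exact ⟨s.image h, by simp,
    Finset.card_image_le.trans hk, sum_smul_mem_span_image s c⟩

theorem coversWithin_of_isSpannedByAtMost {k : ℕ}
    (H : ∀ v, IsSpannedByAtMost F (Set.range h) k v) : CoversWithin h k := by
  classical
  intro v
  obtain ⟨t, ht, hk, hv⟩ := H v
  obtain ⟨f, -, rfl⟩ := Submodule.mem_span_finset.mp hv
  have hpre : ∀ x ∈ t, ∃ j, h j = x := fun x hx => ht hx
  rcases t.eq_empty_or_nonempty with rfl | ⟨x₀, hx₀⟩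
  · exact ⟨∅, 0, by simp, by simp⟩
  have : Nonempty (Fin n) := ⟨(hpre x₀ hx₀).choose⟩
  choose! σ hσ using hpre
  have hinj : Set.InjOn σ t := fun x hx y hy hxy => by rw [← hσ x hx, ← hσ y hy, hxy]
  refine ⟨t.image σ, fun j => f (h j), Finset.card_image_le.trans hk, ?_⟩
  rw [Finset.sum_image hinj]
  exact Finset.sum_congr rfl fun x hx => by simp only [hσ x hx]

theorem locallyOptimal_of_not_isSpannedByAtMost (hinj : Function.Injective h) {k : ℕ}
    (H : ∀ j, ∃ v, ¬ IsSpannedByAtMost F (Set.range h \ {h j}) k v) : LocallyOptimal h k := by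
  classical
  intro j₀ hall
  obtain ⟨v, hv⟩ := H j₀
  obtain ⟨s, c, hj₀, hk, rfl⟩ := hall v
  refine hv ⟨s.image h, ?_, Finset.card_image_le.trans hk, sum_smul_mem_span_image s c⟩
  intro x hx
  obtain ⟨j, hj, rfl⟩ := Finset.mem_image.mp hx
  exact ⟨Set.mem_range_self j, fun hjj => hj₀ (hinj hjj ▸ hj)⟩

end Columns

section MinDist

variable {F : Type} [Field F] {n r : ℕ} {h : Fin n → Fin r → F}

theorem wt_eq_card (x : Fin n → F) [DecidablePred fun j => x j ≠ 0] :
    wt x = (Finset.univ.filter fun j => x j ≠ 0).card := by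
  rw [wt, ← Set.ncard_coe_finset]
  congr 1
  ext j
  simp

theorem three_le_wt (hne : ∀ j, h j ≠ 0) (hprop : ∀ i j (d : F), h i = d • h j → i = j)
    {x : Fin n → F} (hx : ∑ j, x j • h j = 0) (hx0 : x ≠ 0) : 3 ≤ wt x := by
  classical
  set s := Finset.univ.filter fun j => x j ≠ 0 with hs
  have hmem : ∀ {j}, j ∈ s ↔ x j ≠ 0 := by simp [hs]
  have hsum : ∑ j ∈ s, x j • h j = 0 := by
    rw [← hx]
    exact Finset.sum_filter_of_ne fun j _ hj h0 => hj (by rw [h0, zero_smul])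
  have hpos : 0 < s.card := by
    obtain ⟨j, hj⟩ := Function.ne_iff.mp hx0
    exact Finset.card_pos.mpr ⟨j, hmem.mpr hj⟩
  rw [wt_eq_card, ← hs]
  by_contra! hlt
  rcases (by omega : s.card = 1 ∨ s.card = 2) with h1 | h2
  · obtain ⟨i, hi⟩ := Finset.card_eq_one.mp h1
    rw [hi, Finset.sum_singleton] at hsum
    exact (smul_eq_zero.mp hsum).elim (hmem.mp (hi ▸ Finset.mem_singleton_self i)) (hne i)
  · obtain ⟨i, j, hij, hi⟩ := Finset.card_eq_two.mp h2
    have hxi : x i ≠ 0 := hmem.mp (by simp [hi])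
    rw [hi, Finset.sum_pair hij] at hsum
    refine hij (hprop i j (-(x j) / x i) ?_)
    rw [div_eq_inv_mul, mul_smul, neg_smul, eq_neg_of_add_eq_zero_right hsum, neg_neg,
      smul_smul, inv_mul_cancel₀ hxi, one_smul]

theorem exists_wt_eq_three {j₁ j₂ j₃ : Fin n} (h₁₂ : j₁ ≠ j₂) (h₁₃ : j₁ ≠ j₃) (h₂₃ : j₂ ≠ j₃)
    {c₁ c₂ c₃ : F} (hc₁ : c₁ ≠ 0) (hc₂ : c₂ ≠ 0) (hc₃ : c₃ ≠ 0)
    (hrel : c₁ • h j₁ + c₂ • h j₂ + c₃ • h j₃ = 0) :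
    ∃ x : Fin n → F, ∑ j, x j • h j = 0 ∧ wt x = 3 := by
  classical
  refine ⟨Pi.single j₁ c₁ + Pi.single j₂ c₂ + Pi.single j₃ c₃, ?_, ?_⟩
  · simpa [add_smul, Finset.sum_add_distrib, Pi.single_apply, ite_smul] using hrel
  · have hsupp : (Finset.univ.filter fun j =>
        (Pi.single j₁ c₁ + Pi.single j₂ c₂ + Pi.single j₃ c₃ : Fin n → F) j ≠ 0) =
          {j₁, j₂, j₃} := by
      ext j
      by_cases h1 : j = j₁ <;> by_cases h2 : j = j₂ <;> by_cases h3 : j = j₃ <;>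
        simp_all [Pi.single_apply]
    rw [wt_eq_card, hsupp, Finset.card_insert_of_notMem (by simp [h₁₂, h₁₃]),
      Finset.card_pair h₂₃]

end MinDist

section MinDistConstructionS

variable {F : Type} [Field F] {ρ : ℕ}

theorem ne_zero_of_mem_constructionS {x : Fin (2 * ρ + 2) → F} (hx : x ∈ constructionS F ρ) :
    x ≠ 0 := by
  rintro rfl
  rcases mem_constructionS_iff.mp hx with h | ⟨u, hu, a, b, c, hpt, h⟩
  · have := congrArg (coord (2 * ρ + 1)) h
    rw [coord_unitV (by omega), if_pos rfl, map_zero] at this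
    exact zero_ne_one this
  · have := congrArg (coord (2 * u)) h
    rw [coord_blockVec_self (by omega), map_zero] at this
    exact hpt.snd_ne_zero this.symm

theorem eq_of_eq_smul_of_mem_constructionS {x y : Fin (2 * ρ + 2) → F}
    (hx : x ∈ constructionS F ρ) (hy : y ∈ constructionS F ρ) {d : F} (hxy : y = d • x) :
    y = x := by
  rcases mem_constructionS_iff.mp hx with rfl | ⟨u, hu, a, b, c, hpt, rfl⟩
  · rcases mem_constructionS_iff.mp hy with rfl | ⟨u', hu', a', b', c', hpt', rfl⟩
    · rfl
    · have := congrArg (coord (2 * u')) hxy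
      rw [coord_blockVec_self (by omega), map_smul, coord_unitV (by omega), if_neg (by omega),
        smul_zero] at this
      exact absurd this hpt'.snd_ne_zero
  · have hd : d ≠ 0 := by
      rintro rfl
      exact ne_zero_of_mem_constructionS hy (by simpa using hxy)
    rw [smul_blockVec] at hxy
    have hy2u : coord (2 * u) y ≠ 0 := by
      rw [hxy, coord_blockVec_self (by omega)]
      exact mul_ne_zero hd hpt.snd_ne_zero
    obtain ⟨-, a', b', c', hpt', rfl⟩ := isBlockPoint_of_coord_ne_zero hy hy2u
    have h2 := congrArg (coord (2 * u)) hxy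
    have h3 := congrArg (coord (2 * u + 1)) hxy
    rw [coord_blockVec_self (by omega), coord_blockVec_self (by omega)] at h2
    rw [coord_blockVec_succ (by omega), coord_blockVec_succ (by omega)] at h3
    obtain ⟨rfl, rfl, rfl⟩ := hpt.eq_of_smul hpt' h2.symm h3.symm
    rfl

theorem hasMinDist_of_range_eq_constructionS [Fintype F] (h3 : 3 ≤ Fintype.card F) {n : ℕ}
    {h : Fin n → Fin (2 * ρ + 2) → F} (hinj : Function.Injective h)
    (hrange : Set.range h = constructionS F ρ) : HasMinDist h 3 := by
  have hmem : ∀ j, h j ∈ constructionS F ρ := fun j => hrange ▸ Set.mem_range_self j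
  refine ⟨fun x hx hx0 => three_le_wt (fun j => ne_zero_of_mem_constructionS (hmem j))
    (fun i j d hij => hinj (eq_of_eq_smul_of_mem_constructionS (hmem j) (hmem i) hij)) hx hx0, ?_⟩
  obtain ⟨b, hb0, hb1⟩ := exists_ne_zero_ne_one h3
  have hline : ∀ a : F, ∃ j, h j = blockVec (2 * ρ + 2) 0 0 1 a := fun a => by
    have := blockVec_line_mem (ρ := ρ) a
    rwa [← hrange] at this
  obtain ⟨j₀, hj₀⟩ := hline 0
  obtain ⟨j₁, hj₁⟩ := hline 1
  obtain ⟨j_b, hj_b⟩ := hline b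
  have hne : ∀ {i j : Fin n} {a a' : F}, h i = blockVec (2 * ρ + 2) 0 0 1 a →
      h j = blockVec (2 * ρ + 2) 0 0 1 a' → a ≠ a' → i ≠ j := fun hi hj haa hij => haa (by
    have := congrArg (coord (2 * 0 + 1)) (hi.symm.trans (hij ▸ hj))
    rwa [coord_blockVec_succ (by omega), coord_blockVec_succ (by omega)] at this)
  refine exists_wt_eq_three (hne hj₀ hj₁ zero_ne_one) (hne hj₀ hj_b hb0.symm)
    (hne hj₁ hj_b hb1.symm) (sub_ne_zero.mpr hb1.symm) hb0 (neg_ne_zero.mpr one_ne_zero)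
    (c₁ := 1 - b) (c₂ := b) (c₃ := -1) ?_
  rw [hj₀, hj₁, hj_b, smul_blockVec, smul_blockVec, smul_blockVec, blockVec_add, blockVec_add,
    ← blockVec_zero_zero_zero 0]
  congr 1 <;> ring

end MinDistConstructionS

/-- let `V̂_ρ` be the code whose parity-check matrix has as columns
the points of `S_ρ` of Construction S, `ρ = R - 1`.  (i) If `q = 4` or `q ≥ 7`,
then for every `R ≥ 1` it is an `[Rq+1, Rq+1-2R]_q` code (rank `2R` parity-check
matrix) with minimum distance `3` and covering radius `R`, and it is locally
optimal.  (ii) The same holds for `q = 5` and `1 ≤ R ≤ 5`. -/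
theorem stmt12 (q R ρ : ℕ) (F : Type) [Field F] [Fintype F] (hF : Fintype.card F = q)
    (hR : 1 ≤ R) (hρ : ρ = R - 1)
    (h : Fin (R * q + 1) → Fin (2 * ρ + 2) → F)
    (hinj : Function.Injective h) (hrange : Set.range h = constructionS F ρ)
    (hq : (q = 4 ∨ 7 ≤ q) ∨ (q = 5 ∧ R ≤ 5)) :
    Submodule.span F (Set.range h) = ⊤
    ∧ HasCoveringRadius h R ∧ HasMinDist h 3 ∧ LocallyOptimal h R := by
  have h4 : 4 ≤ Fintype.card F := by omega
  obtain rfl : R = ρ + 1 := by omega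
  have hcover : ∀ v, IsSpannedByAtMost F (Set.range h) (ρ + 1) v := fun v =>
    hrange ▸ constructionS_spanned h4 v
  refine ⟨Submodule.eq_top_iff'.mpr fun v => (hcover v).mem_span,
    ⟨coversWithin_of_isSpannedByAtMost hcover, fun k hk hk' => ?_⟩,
    hasMinDist_of_range_eq_constructionS (by omega) hinj hrange,
    locallyOptimal_of_not_isSpannedByAtMost hinj fun j => ?_⟩
  · exact not_spanned_evensExcept
      (hrange ▸ (isSpannedByAtMost_of_coversWithin hk' _).mono (by omega))
  · rcases mem_constructionS_iff.mp (hrange ▸ Set.mem_range_self j) with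
      hj | ⟨u, hu, x, y, z, hpt, hj⟩
    · exact ⟨_, hrange ▸ hj ▸ not_spanned_evensExcept_add_unitV⟩
    · exact ⟨_, hrange ▸ hj ▸ not_spanned_blockVec_add_evensExcept hu hpt⟩
end

section
/- Let K ⊆ L be finite fields with [L : K] = 2, so that |L| = q is a square and |K| = √q. Let D be a set of nonzero vectors of K³ that is a double blocking set of the subplane PG(2,√q) ⊂ PG(2,q): for every 2-dimensional K-subspace W of K³ there exist two K-linearly independent vectors of D lying in W. Then every nonzero vector of L³ is an L-linear combination of at most 2 vectors of D; that is, D is a 1-saturating set in the plane PG(2,q). -/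
open Module Submodule

/-- The linear functional `u ↦ ∑ i, a i * u i` on `Fin 3 → F`. -/
def dotL {F : Type} [Field F] (a : Fin 3 → F) : (Fin 3 → F) →ₗ[F] F where
  toFun u := ∑ i, a i * u i
  map_add' u v := by simp [mul_add, Finset.sum_add_distrib]
  map_smul' c u := by simp [Finset.mul_sum, mul_left_comm]

lemma dot_ker_finrank {F : Type} [Field F] (a : Fin 3 → F) (ha : a ≠ 0) :
    Module.finrank F (LinearMap.ker (dotL a)) = 2 := by
  obtain ⟨i, hi⟩ : ∃ i, a i ≠ 0 := by
    by_contra h; push_neg at h; exact ha (funext h)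
  have hsurj : Function.Surjective (dotL a) := by
    intro y
    refine ⟨y • (Pi.single i (a i)⁻¹ : Fin 3 → F), ?_⟩
    simp only [dotL, LinearMap.coe_mk, AddHom.coe_mk, Pi.smul_apply, Pi.single_apply,
      smul_eq_mul, mul_ite, mul_zero, Finset.sum_ite_eq', Finset.mem_univ, if_true]
    field_simp
  have h1 := LinearMap.finrank_range_add_finrank_ker (dotL a)
  rw [LinearMap.range_eq_top.mpr hsurj] at h1
  simp [Module.finrank_pi] at h1
  omega


/-- let `K ⊆ L` be finite fields with `[L : K] = 2` (so `|L| = q`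
is a square and `|K| = √q`).  Let `D` be a set of nonzero vectors of `K³`
forming a double blocking set of the subplane `PG(2,√q) ⊂ PG(2,q)`: every
2-dimensional `K`-subspace of `K³` contains two `K`-linearly independent
vectors of `D`.  Then every nonzero vector of `L³` is an `L`-linear combination
of at most `2` vectors of (the coordinatewise embedding of) `D`; that is, `D`
is a `1`-saturating set in `PG(2,q)`. -/
theorem stmt18 (K L : Type) [Field K] [Field L] [Fintype K] [Fintype L] [Algebra K L]
    (hdim : Module.finrank K L = 2)
    (D : Set (Fin 3 → K)) (hD0 : ∀ v ∈ D, v ≠ 0)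
    (hblock : ∀ W : Submodule K (Fin 3 → K), Module.finrank K W = 2 →
      ∃ u ∈ D, ∃ v ∈ D, u ∈ W ∧ v ∈ W ∧ LinearIndependent K ![u, v]) :
    ∀ w : Fin 3 → L, w ≠ 0 →
      IsCombOfAtMost ((fun v : Fin 3 → K => fun i => algebraMap K L (v i)) '' D) 2 w := by
  intro w hw
  classical
  have hFD : FiniteDimensional K L :=
    FiniteDimensional.of_finrank_pos (by rw [hdim]; norm_num)
  -- Step 1: find a nonzero a : Fin 3 → K with ∑ i, a i • w i = 0
  let f : (Fin 3 → K) →ₗ[K] L :=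
    { toFun := fun a => ∑ i, a i • w i
      map_add' := fun a b => by simp [add_smul, Finset.sum_add_distrib]
      map_smul' := fun c a => by simp [Finset.smul_sum, smul_smul] }
  obtain ⟨a, hamem, ha⟩ : ∃ a, a ∈ LinearMap.ker f ∧ a ≠ 0 := by
    apply Submodule.exists_mem_ne_zero_of_ne_bot
    intro hbot
    have hinj : Function.Injective f := by
      rw [← LinearMap.ker_eq_bot]; exact hbot
    have := LinearMap.finrank_le_finrank_of_injective hinj
    rw [hdim, Module.finrank_pi] at this
    simp at this
  have ha0 : ∑ i, a i • w i = 0 := hamem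
  -- Step 2: the kernel plane W in K³
  obtain ⟨u, hu, v, hv, huW, hvW, hindep⟩ := hblock (LinearMap.ker (dotL a))
    (dot_ker_finrank a ha)
  set e : (Fin 3 → K) → (Fin 3 → L) := fun x i => algebraMap K L (x i) with he
  -- Step 3: L-linear independence of e u, e v
  have hpair := LinearIndependent.pair_iff.mp hindep
  have hLi : ∀ s t : L, s • e u + t • e v = 0 → s = 0 ∧ t = 0 := by
    intro s t hst
    have hco : ∀ i, u i • s + v i • t = 0 := by
      intro i
      have h1 := congrFun hst i
      simpa [he, Algebra.smul_def, mul_comm] using h1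
    let b := Basis.ofVectorSpace K L
    have hrep : ∀ j, b.repr s j = 0 ∧ b.repr t j = 0 := by
      intro j
      have h3 : (b.repr s j) • u + (b.repr t j) • v = 0 := by
        funext i
        have h2 := congrArg (fun x => b.repr x j) (hco i)
        simpa [mul_comm] using h2
      exact hpair _ _ h3
    have hs : b.repr s = 0 := Finsupp.ext fun j => (hrep j).1
    have ht : b.repr t = 0 := Finsupp.ext fun j => (hrep j).2
    constructor
    · exact b.repr.injective (by rw [hs, map_zero])
    · exact b.repr.injective (by rw [ht, map_zero])
  have hLindep : LinearIndependent L ![e u, e v] := LinearIndependent.pair_iff.mpr hLi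
  -- Step 4: the L-kernel plane
  set aL : Fin 3 → L := fun i => algebraMap K L (a i) with haL
  have haL0 : aL ≠ 0 := by
    intro h
    apply ha
    funext i
    have h2 : algebraMap K L (a i) = 0 := congrFun h i
    exact (algebraMap K L).injective (by rw [h2]; simp)
  have hmem : ∀ x : Fin 3 → K, x ∈ LinearMap.ker (dotL a) →
      e x ∈ LinearMap.ker (dotL aL) := by
    intro x hx
    have hx' : ∑ i, a i * x i = 0 := hx
    simp only [LinearMap.mem_ker, dotL, LinearMap.coe_mk, AddHom.coe_mk, haL, he]
    have h5 : ∑ i, (algebraMap K L) (a i * x i) = 0 := by rw [← map_sum, hx', map_zero]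
    simpa [map_mul] using h5
  have hwmem : w ∈ LinearMap.ker (dotL aL) := by
    simp only [LinearMap.mem_ker, dotL, LinearMap.coe_mk, AddHom.coe_mk, haL]
    rw [← ha0]
    exact Finset.sum_congr rfl fun i _ => (Algebra.smul_def _ _).symm
  have hspan_le : Submodule.span L {e u, e v} ≤ LinearMap.ker (dotL aL) := by
    rw [Submodule.span_le]
    rintro x (rfl | rfl)
    · exact hmem u huW
    · exact hmem v hvW
  have hrange : Set.range ![e u, e v] = {e u, e v} := by
    ext x
    simp [Fin.exists_fin_two, or_comm]
  have hfr : Module.finrank L (Submodule.span L {e u, e v}) = 2 := by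
    have h4 := finrank_span_eq_card hLindep
    rw [hrange] at h4
    simpa using h4
  have heq : Submodule.span L {e u, e v} = LinearMap.ker (dotL aL) :=
    Submodule.eq_of_le_of_finrank_eq hspan_le (by rw [hfr, dot_ker_finrank aL haL0])
  have hwspan : w ∈ Submodule.span L {e u, e v} := heq ▸ hwmem
  obtain ⟨c1, c2, hc⟩ := Submodule.mem_span_pair.mp hwspan
  -- Step 5: assemble
  have hne : e u ≠ e v := by
    intro h
    have := hLi 1 (-1) (by rw [h]; simp)
    exact one_ne_zero this.1
  refine ⟨{e u, e v}, fun x => if x = e u then c1 else c2, ?_, ?_, ?_⟩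
  · intro x hx
    simp only [Finset.coe_insert, Finset.coe_singleton, Set.mem_insert_iff,
      Set.mem_singleton_iff] at hx
    rcases hx with rfl | rfl
    · exact ⟨u, hu, rfl⟩
    · exact ⟨v, hv, rfl⟩
  · exact le_trans (Finset.card_insert_le _ _) (by simp)
  · rw [Finset.sum_pair hne,
      show (fun x => if x = e u then c1 else c2) (e u) = c1 from if_pos rfl,
      show (fun x => if x = e u then c1 else c2) (e v) = c2 from if_neg (Ne.symm hne)]
    exact hc.symm
end
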